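/- arXiv:1811.09313 — 11 statements merged into one kernel-verified Lean document; each statement's English description precedes it below -/
import Mathlib

section
/- Let (α_n) be a real sequence bounded below, (β_n) a nonnegative sequence, and (ε_n) a real sequence such that α_{n+1} ≤ α_n − β_n + ε_n for all n, with ∑ ε_n convergent in ℝ. Then (α_n) converges in ℝ and ∑ β_n < +∞. -/
open Filter

theorem stmt_3 (α β ε : ℕ → ℝ) (hbd : BddBelow (Set.range α)) (hβ : ∀ n, 0 ≤ β n)
    (hrec : ∀ n, α (n + 1) ≤ α n - β n + ε n)
    (hε : ∃ l : ℝ, Tendsto (fun N => ∑ n ∈ Finset.range N, ε n) atTop (nhds l)) :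
    (∃ l : ℝ, Tendsto α atTop (nhds l)) ∧ Summable β := by
  obtain ⟨l, hl⟩ := hε
  set S : ℕ → ℝ := fun N => ∑ n ∈ Finset.range N, ε n with hS
  set a : ℕ → ℝ := fun n => α n - S n with ha
  have hstep : ∀ n, a (n + 1) ≤ a n - β n := by
    intro n
    have : S (n + 1) = S n + ε n := Finset.sum_range_succ ε n
    simp only [ha, this]
    have := hrec n
    linarith
  have hant : Antitone a := antitone_nat_of_succ_le fun n => by
    have := hstep n; have := hβ n; linarith
  -- bounded below
  obtain ⟨m, hm⟩ := hbd
  obtain ⟨M, hM⟩ := (hl.bddAbove_range).imp fun M hM => hM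
  have habd : ∀ n, m - M ≤ a n := by
    intro n
    have h1 : m ≤ α n := hm ⟨n, rfl⟩
    have h2 : S n ≤ M := hM ⟨n, rfl⟩
    simp only [ha]; linarith
  have hconv : Tendsto a atTop (nhds (⨅ n, a n)) :=
    tendsto_atTop_ciInf hant ⟨m - M, fun x ⟨n, hn⟩ => hn ▸ habd n⟩
  constructor
  · refine ⟨(⨅ n, a n) + l, ?_⟩
    have : α = fun n => a n + S n := by funext n; simp [ha]
    rw [this]
    exact hconv.add hl
  · apply summable_of_sum_range_le hβ (c := a 0 - (m - M))
    intro N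
    have key : ∀ N, ∑ n ∈ Finset.range N, β n ≤ a 0 - a N := by
      intro N
      induction N with
      | zero => simp
      | succ k ih =>
        rw [Finset.sum_range_succ]
        have := hstep k
        linarith
    have := key N
    have := habd N
    linarith
end

section
/- For a real sequence (α_n), if any two of the following three statements hold, then so does the third: (i) (n·α_n) converges in ℝ; (ii) ∑ α_n converges in ℝ; (iii) ∑ n(α_n − α_{n+1}) converges in ℝ. -/
open Filter

lemma key_id (α : ℕ → ℝ) (N : ℕ) :
    ∑ n ∈ Finset.range N, (n : ℝ) * (α n - α (n + 1)) =
      (∑ n ∈ Finset.range N, α n) - α 0 - ((N : ℝ) - 1) * α N := by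
  induction N with
  | zero => simp
  | succ N ih =>
    rw [Finset.sum_range_succ, Finset.sum_range_succ (f := α), ih]
    push_cast
    ring

lemma alpha_zero (α : ℕ → ℝ) (l : ℝ)
    (h : Tendsto (fun (n : ℕ) => (n : ℝ) * α n) atTop (nhds l)) :
    Tendsto α atTop (nhds 0) := by
  have h2 : Tendsto (fun n : ℕ => ((n : ℝ) * α n) * (1 / n)) atTop (nhds (l * 0)) :=
    h.mul tendsto_one_div_atTop_nhds_zero_nat
  rw [mul_zero] at h2
  refine h2.congr' ?_
  filter_upwards [eventually_ge_atTop 1] with n hn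
  have : (n : ℝ) ≠ 0 := by positivity
  field_simp

lemma alpha_zero' (α : ℕ → ℝ) (m : ℝ)
    (h : Tendsto (fun (n : ℕ) => ((n : ℝ) - 1) * α n) atTop (nhds m)) :
    Tendsto α atTop (nhds 0) := by
  have hsub : Tendsto (fun n : ℕ => (n : ℝ) - 1) atTop atTop :=
    tendsto_atTop_add_const_right _ (-1) tendsto_natCast_atTop_atTop
  have hinv : Tendsto (fun n : ℕ => ((n : ℝ) - 1)⁻¹) atTop (nhds 0) :=
    tendsto_inv_atTop_zero.comp hsub
  have h2 : Tendsto (fun n : ℕ => (((n : ℝ) - 1) * α n) * ((n : ℝ) - 1)⁻¹)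
      atTop (nhds (m * 0)) := h.mul hinv
  rw [mul_zero] at h2
  refine h2.congr' ?_
  filter_upwards [eventually_ge_atTop 2] with n hn
  have : (n : ℝ) - 1 ≠ 0 := by
    have : (2 : ℝ) ≤ n := by exact_mod_cast hn
    linarith
  field_simp

theorem stmt_4 (α : ℕ → ℝ) :
    ((∃ l : ℝ, Tendsto (fun (n : ℕ) => (n : ℝ) * α n) atTop (nhds l)) →
      (∃ l : ℝ, Tendsto (fun N => ∑ n ∈ Finset.range N, α n) atTop (nhds l)) →
      (∃ l : ℝ, Tendsto (fun N => ∑ n ∈ Finset.range N, (n : ℝ) * (α n - α (n + 1)))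
        atTop (nhds l))) ∧
    ((∃ l : ℝ, Tendsto (fun (n : ℕ) => (n : ℝ) * α n) atTop (nhds l)) →
      (∃ l : ℝ, Tendsto (fun N => ∑ n ∈ Finset.range N, (n : ℝ) * (α n - α (n + 1)))
        atTop (nhds l)) →
      (∃ l : ℝ, Tendsto (fun N => ∑ n ∈ Finset.range N, α n) atTop (nhds l))) ∧
    ((∃ l : ℝ, Tendsto (fun N => ∑ n ∈ Finset.range N, α n) atTop (nhds l)) →
      (∃ l : ℝ, Tendsto (fun N => ∑ n ∈ Finset.range N, (n : ℝ) * (α n - α (n + 1)))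
        atTop (nhds l)) →
      (∃ l : ℝ, Tendsto (fun (n : ℕ) => (n : ℝ) * α n) atTop (nhds l))) := by
  refine ⟨?_, ?_, ?_⟩
  · rintro ⟨l, hl⟩ ⟨s, hs⟩
    have h0 := alpha_zero α l hl
    have hg : Tendsto (fun n : ℕ => ((n : ℝ) - 1) * α n) atTop (nhds (l - 0)) := by
      have := hl.sub h0
      refine this.congr fun n => by ring
    refine ⟨s - α 0 - (l - 0), ?_⟩
    have := (hs.sub (tendsto_const_nhds (x := α 0))).sub hg
    exact this.congr fun N => (key_id α N).symm
  · rintro ⟨l, hl⟩ ⟨t, ht⟩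
    have h0 := alpha_zero α l hl
    have hg : Tendsto (fun n : ℕ => ((n : ℝ) - 1) * α n) atTop (nhds (l - 0)) := by
      have := hl.sub h0
      refine this.congr fun n => by ring
    refine ⟨t + α 0 + (l - 0), ?_⟩
    have := (ht.add (tendsto_const_nhds (x := α 0))).add hg
    refine this.congr fun N => ?_
    rw [key_id α N]; ring
  · rintro ⟨s, hs⟩ ⟨t, ht⟩
    have hg : Tendsto (fun N : ℕ => ((N : ℝ) - 1) * α N) atTop (nhds (s - α 0 - t)) := by
      have := (hs.sub (tendsto_const_nhds (x := α 0))).sub ht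
      refine this.congr fun N => ?_
      rw [key_id α N]; ring
    have h0 := alpha_zero' α _ hg
    refine ⟨s - α 0 - t + 0, ?_⟩
    have := hg.add h0
    refine this.congr fun n => by ring
end

section
/- Let C be a nonempty subset of a real Hilbert space H, and let (u_n), (v_n) be sequences in H such that u_n − v_n → 0, every weak sequential cluster point of (v_n) lies in C, and for every c ∈ C the sequence (‖u_n − c‖) converges. Then there exists w ∈ C such that u_n ⇀ w and v_n ⇀ w (weak convergence). -/
open Filter

lemma weakSeqCompact {H : Type*} [NormedAddCommGroup H] [InnerProductSpace ℝ H]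
    [CompleteSpace H] (x : ℕ → H) (M : ℝ) (hb : ∀ n, ‖x n‖ ≤ M) :
    ∃ (w : H) (φ : ℕ → ℕ), StrictMono φ ∧
      ∀ y : H, Tendsto (fun n => (inner ℝ (x (φ n)) y : ℝ)) atTop (nhds (inner ℝ w y)) := by
  have hM0 : (0:ℝ) ≤ M := le_trans (norm_nonneg _) (hb 0)
  -- diagonal extraction via sequential compactness of a product of intervals
  set S : Set (ℕ → ℝ) := Set.univ.pi fun _ => Set.Icc (-(M*M)) (M*M) with hSdef
  have hS : IsSeqCompact S :=
    (isCompact_univ_pi fun _ => isCompact_Icc).isSeqCompact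
  have hmem : ∀ n, (fun k => (inner ℝ (x n) (x k) : ℝ)) ∈ S := by
    intro n
    refine Set.mem_univ_pi.2 fun k => ?_
    have h1 : |(inner ℝ (x n) (x k) : ℝ)| ≤ M * M :=
      (abs_real_inner_le_norm _ _).trans
        (mul_le_mul (hb n) (hb k) (norm_nonneg _) hM0)
    exact abs_le.1 h1
  obtain ⟨g, -, φ, hφ, hconv⟩ := hS hmem
  have hpt : ∀ k, Tendsto (fun n => (inner ℝ (x (φ n)) (x k) : ℝ)) atTop (nhds (g k)) := by
    intro k
    exact (tendsto_pi_nhds.1 hconv) k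
  -- convergence on the span
  have hspan : ∀ y ∈ Submodule.span ℝ (Set.range x),
      ∃ l : ℝ, Tendsto (fun n => (inner ℝ (x (φ n)) y : ℝ)) atTop (nhds l) := by
    intro y hy
    induction hy using Submodule.span_induction with
    | mem z hz =>
      obtain ⟨k, rfl⟩ := hz
      exact ⟨g k, hpt k⟩
    | zero => exact ⟨0, by simpa using tendsto_const_nhds⟩
    | add a b _ _ iha ihb =>
      obtain ⟨la, hla⟩ := iha
      obtain ⟨lb, hlb⟩ := ihb
      exact ⟨la + lb, by simpa [inner_add_right] using hla.add hlb⟩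
    | smul r a _ iha =>
      obtain ⟨la, hla⟩ := iha
      exact ⟨r * la, by simpa [real_inner_smul_right] using hla.const_mul r⟩
  -- convergence on the closure of the span
  set K : Submodule ℝ H := (Submodule.span ℝ (Set.range x)).topologicalClosure with hK
  have hclos : ∀ y ∈ K,
      ∃ l : ℝ, Tendsto (fun n => (inner ℝ (x (φ n)) y : ℝ)) atTop (nhds l) := by
    intro y hy
    have hcau : CauchySeq (fun n => (inner ℝ (x (φ n)) y : ℝ)) := by
      rw [Metric.cauchySeq_iff]
      intro ε hε
      have hMpos : (0:ℝ) < M + 1 := by linarith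
      have hε4 : (0:ℝ) < ε / (4 * (M + 1)) := by positivity
      have hy' : y ∈ closure ((Submodule.span ℝ (Set.range x) : Submodule ℝ H) : Set H) := hy
      obtain ⟨z, hzmem, hzd⟩ := Metric.mem_closure_iff.1 hy' _ hε4
      obtain ⟨lz, hlz⟩ := hspan z hzmem
      obtain ⟨N, hN⟩ := Metric.cauchySeq_iff.1 hlz.cauchySeq (ε/2) (by linarith)
      refine ⟨N, fun m hm n hn => ?_⟩
      have hyz : ‖y - z‖ < ε / (4 * (M + 1)) := by
        rwa [dist_eq_norm] at hzd
      have hbnd : ∀ j, |(inner ℝ (x (φ j)) (y - z) : ℝ)| ≤ M * (ε / (4 * (M + 1))) := by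
        intro j
        calc |(inner ℝ (x (φ j)) (y - z) : ℝ)| ≤ ‖x (φ j)‖ * ‖y - z‖ :=
              abs_real_inner_le_norm _ _
          _ ≤ M * (ε / (4 * (M + 1))) :=
              mul_le_mul (hb _) hyz.le (norm_nonneg _) hM0
      have hquarter : M * (ε / (4 * (M + 1))) < ε / 4 := by
        rw [← mul_div_assoc, div_lt_div_iff₀ (by positivity) (by norm_num : (0:ℝ) < 4)]
        nlinarith
      have hmid := hN m hm n hn
      rw [Real.dist_eq] at hmid ⊢
      have e1 : (inner ℝ (x (φ m)) y : ℝ) - inner ℝ (x (φ n)) y =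
          (inner ℝ (x (φ m)) (y - z) : ℝ) + ((inner ℝ (x (φ m)) z : ℝ) - inner ℝ (x (φ n)) z)
            + (inner ℝ (x (φ n)) (z - y) : ℝ) := by
        simp only [inner_sub_right]; ring
      rw [e1]
      calc |(inner ℝ (x (φ m)) (y - z) : ℝ) + ((inner ℝ (x (φ m)) z : ℝ) - inner ℝ (x (φ n)) z)
            + (inner ℝ (x (φ n)) (z - y) : ℝ)|
          ≤ |(inner ℝ (x (φ m)) (y - z) : ℝ)| + |(inner ℝ (x (φ m)) z : ℝ) - inner ℝ (x (φ n)) z|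
            + |(inner ℝ (x (φ n)) (z - y) : ℝ)| :=
              (abs_add_le _ _).trans (add_le_add_left (abs_add_le _ _) _)
        _ < ε/4 + ε/2 + ε/4 := by
            have h3 : |(inner ℝ (x (φ n)) (z - y) : ℝ)| ≤ M * (ε / (4 * (M + 1))) := by
              rw [← neg_sub y z, inner_neg_right, abs_neg]
              exact hbnd n
            exact add_lt_add (add_lt_add ((hbnd m).trans_lt hquarter) hmid)
              (h3.trans_lt hquarter)
        _ = ε := by ring
    exact cauchySeq_tendsto_of_complete hcau
  -- convergence everywhere, via orthogonal projection
  have hall : ∀ y : H, ∃ l : ℝ,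
      Tendsto (fun n => (inner ℝ (x (φ n)) y : ℝ)) atTop (nhds l) := by
    intro y
    have hxK : ∀ n, x n ∈ K := fun n =>
      (Submodule.le_topologicalClosure _) (Submodule.subset_span ⟨n, rfl⟩)
    have hKc : CompleteSpace K := (Submodule.isClosed_topologicalClosure _).completeSpace_coe
    have hperp : y - K.starProjection y ∈ Kᗮ :=
      K.sub_starProjection_mem_orthogonal y
    obtain ⟨l, hl⟩ := hclos (K.starProjection y) (K.orthogonalProjectionOnto y).2
    refine ⟨l, hl.congr fun n => ?_⟩
    have h0 : (inner ℝ (x (φ n)) (y - K.starProjection y) : ℝ) = 0 :=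
      (Submodule.mem_orthogonal K _).1 hperp _ (hxK _)
    rw [inner_sub_right] at h0
    linarith
  choose l hl using hall
  -- the limit functional is linear and bounded
  have hadd : ∀ a b : H, l (a + b) = l a + l b := by
    intro a b
    refine tendsto_nhds_unique ?_ ((hl a).add (hl b))
    simpa [inner_add_right] using hl (a + b)
  have hsmul : ∀ (r : ℝ) (a : H), l (r • a) = r * l a := by
    intro r a
    refine tendsto_nhds_unique ?_ ((hl a).const_mul r)
    simpa [real_inner_smul_right] using hl (r • a)
  have hbound : ∀ y : H, ‖l y‖ ≤ M * ‖y‖ := by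
    intro y
    rw [Real.norm_eq_abs]
    refine le_of_tendsto (hl y).abs (Eventually.of_forall fun n => ?_)
    exact (abs_real_inner_le_norm _ _).trans
      (mul_le_mul_of_nonneg_right (hb _) (norm_nonneg _))
  let Lmap : H →ₗ[ℝ] ℝ :=
    { toFun := l
      map_add' := hadd
      map_smul' := hsmul }
  let L : H →L[ℝ] ℝ := LinearMap.mkContinuous Lmap M hbound
  refine ⟨(InnerProductSpace.toDual ℝ H).symm L, φ, hφ, fun y => ?_⟩
  have : (inner ℝ ((InnerProductSpace.toDual ℝ H).symm L) y : ℝ) = L y := by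
    rw [← InnerProductSpace.toDual_apply_apply, LinearIsometryEquiv.apply_symm_apply]
  rw [this]
  exact hl y

theorem stmt_6 {H : Type*} [NormedAddCommGroup H] [InnerProductSpace ℝ H]
    [CompleteSpace H] (C : Set H) (hC : C.Nonempty) (u v : ℕ → H)
    (huv : Tendsto (fun n => u n - v n) atTop (nhds 0))
    (hcluster : ∀ (w : H) (φ : ℕ → ℕ), StrictMono φ →
      (∀ y : H, Tendsto (fun n => (inner ℝ (v (φ n)) y : ℝ)) atTop
        (nhds (inner ℝ w y))) → w ∈ C)
    (hnorm : ∀ c ∈ C, ∃ l : ℝ, Tendsto (fun n => ‖u n - c‖) atTop (nhds l)) :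
    ∃ w ∈ C,
      (∀ y : H, Tendsto (fun n => (inner ℝ (u n) y : ℝ)) atTop (nhds (inner ℝ w y))) ∧
      (∀ y : H, Tendsto (fun n => (inner ℝ (v n) y : ℝ)) atTop (nhds (inner ℝ w y))) := by
  obtain ⟨c, hc⟩ := hC
  -- uniform bound on ‖u n‖
  obtain ⟨l0, hl0⟩ := hnorm c hc
  obtain ⟨B, hB⟩ := hl0.bddAbove_range
  set M : ℝ := B + ‖c‖ with hM
  have hu_bd : ∀ n, ‖u n‖ ≤ M := by
    intro n
    have h1 : ‖u n - c‖ ≤ B := hB ⟨n, rfl⟩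
    calc ‖u n‖ = ‖u n - c + c‖ := by rw [sub_add_cancel]
      _ ≤ ‖u n - c‖ + ‖c‖ := norm_add_le _ _
      _ ≤ B + ‖c‖ := add_le_add_left h1 _
  -- any weak limit of a subsequence of u is also a weak limit of the corresponding
  -- subsequence of v, hence lies in C
  have hstep : ∀ (w' : H) (σ : ℕ → ℕ), StrictMono σ →
      (∀ y : H, Tendsto (fun n => (inner ℝ (u (σ n)) y : ℝ)) atTop (nhds (inner ℝ w' y))) →
      w' ∈ C ∧
      (∀ y : H, Tendsto (fun n => (inner ℝ (v (σ n)) y : ℝ)) atTop (nhds (inner ℝ w' y))) := by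
    intro w' σ hσ hweak
    have hv : ∀ y : H, Tendsto (fun n => (inner ℝ (v (σ n)) y : ℝ)) atTop
        (nhds (inner ℝ w' y)) := by
      intro y
      have h0 : Tendsto (fun n => (inner ℝ (u (σ n) - v (σ n)) y : ℝ)) atTop (nhds 0) := by
        have := Filter.Tendsto.inner (𝕜 := ℝ) (huv.comp hσ.tendsto_atTop)
          (tendsto_const_nhds (x := y))
        simpa using this
      have := (hweak y).sub h0
      simp only [sub_zero] at this
      refine this.congr fun n => ?_
      simp [inner_sub_left]
    exact ⟨hcluster w' σ hσ hv, hv⟩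
  -- uniqueness of weak subsequential limits belonging to C
  have huniq : ∀ w1, w1 ∈ C → ∀ w2, w2 ∈ C → ∀ σ1 σ2 : ℕ → ℕ,
      StrictMono σ1 → StrictMono σ2 →
      (∀ y : H, Tendsto (fun n => (inner ℝ (u (σ1 n)) y : ℝ)) atTop (nhds (inner ℝ w1 y))) →
      (∀ y : H, Tendsto (fun n => (inner ℝ (u (σ2 n)) y : ℝ)) atTop (nhds (inner ℝ w2 y))) →
      w1 = w2 := by
    intro w1 hw1 w2 hw2 σ1 σ2 hσ1 hσ2 hweak1 hweak2
    obtain ⟨a, ha⟩ := hnorm w1 hw1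
    obtain ⟨b, hb⟩ := hnorm w2 hw2
    set τ : ℝ := (‖w1‖^2 - ‖w2‖^2 - a^2 + b^2) / 2 with hτ
    have key : ∀ n, (inner ℝ (u n) (w1 - w2) : ℝ) =
        (‖w1‖^2 - ‖w2‖^2 - ‖u n - w1‖^2 + ‖u n - w2‖^2) / 2 := by
      intro n
      have h1 := norm_sub_sq_real (u n) w1
      have h2 := norm_sub_sq_real (u n) w2
      rw [inner_sub_right]
      linarith
    have tlim : Tendsto (fun n => (inner ℝ (u n) (w1 - w2) : ℝ)) atTop (nhds τ) := by
      have : Tendsto (fun n => (‖w1‖^2 - ‖w2‖^2 - ‖u n - w1‖^2 + ‖u n - w2‖^2) / 2)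
          atTop (nhds τ) := by
        rw [hτ]
        exact (((tendsto_const_nhds.sub (ha.pow 2)).add (hb.pow 2)).div_const 2).congr
          (fun n => by ring)
      exact this.congr fun n => (key n).symm
    have e1 : (inner ℝ w1 (w1 - w2) : ℝ) = τ :=
      tendsto_nhds_unique (hweak1 (w1 - w2)) (tlim.comp hσ1.tendsto_atTop)
    have e2 : (inner ℝ w2 (w1 - w2) : ℝ) = τ :=
      tendsto_nhds_unique (hweak2 (w1 - w2)) (tlim.comp hσ2.tendsto_atTop)
    have : (inner ℝ (w1 - w2) (w1 - w2) : ℝ) = 0 := by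
      rw [inner_sub_left, e1, e2, sub_self]
    have := inner_self_eq_zero.1 this
    exact sub_eq_zero.1 this
  -- extract a weak subsequential limit of u
  obtain ⟨w, φ0, hφ0, hw0⟩ := weakSeqCompact u M hu_bd
  obtain ⟨hwC, -⟩ := hstep w φ0 hφ0 hw0
  refine ⟨w, hwC, fun y => ?_, fun y => ?_⟩
  · refine tendsto_of_subseq_tendsto fun ns hns => ?_
    obtain ⟨ms, hms, hcomp⟩ := strictMono_subseq_of_tendsto_atTop hns
    obtain ⟨w', ψ, hψ, hw'⟩ := weakSeqCompact (fun n => u (ns (ms n))) M (fun n => hu_bd _)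
    have hσ : StrictMono (fun n => ns (ms (ψ n))) := hcomp.comp hψ
    have hw'2 : ∀ y : H, Tendsto (fun n => (inner ℝ (u (ns (ms (ψ n)))) y : ℝ)) atTop
        (nhds (inner ℝ w' y)) := hw'
    obtain ⟨hw'C, -⟩ := hstep w' _ hσ hw'2
    have : w = w' := huniq w hwC w' hw'C φ0 _ hφ0 hσ hw0 hw'2
    exact ⟨ms ∘ ψ, by rw [this]; exact hw'2 y⟩
  · refine tendsto_of_subseq_tendsto fun ns hns => ?_
    obtain ⟨ms, hms, hcomp⟩ := strictMono_subseq_of_tendsto_atTop hns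
    obtain ⟨w', ψ, hψ, hw'⟩ := weakSeqCompact (fun n => u (ns (ms n))) M (fun n => hu_bd _)
    have hσ : StrictMono (fun n => ns (ms (ψ n))) := hcomp.comp hψ
    have hw'2 : ∀ y : H, Tendsto (fun n => (inner ℝ (u (ns (ms (ψ n)))) y : ℝ)) atTop
        (nhds (inner ℝ w' y)) := hw'
    obtain ⟨hw'C, hv'⟩ := hstep w' _ hσ hw'2
    have : w = w' := huniq w hwC w' hw'C φ0 _ hφ0 hσ hw0 hw'2
    exact ⟨ms ∘ ψ, by rw [this]; exact hv' y⟩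
end

section
/- Let C be a nonempty subset of a real Hilbert space H, (u_n) a sequence in H, and (ε_n) a real sequence with ∑ ε_n convergent, such that for every c ∈ C and every n, ‖u_{n+1} − c‖² ≤ ‖u_n − c‖² + ε_n. Then: (i) for every c ∈ C, (‖u_n − c‖) converges in ℝ; (ii) if the interior of C is nonempty, then (u_n) converges strongly in H. -/
open Filter RealInnerProductSpace

private lemma telescope' {H : Type*} [NormedAddCommGroup H] [InnerProductSpace ℝ H]
    (u : ℕ → H) (ε : ℕ → ℝ) (x : H)
    (h : ∀ n : ℕ, ‖u (n + 1) - x‖ ^ 2 ≤ ‖u n - x‖ ^ 2 + ε n) :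
    ∀ n m : ℕ, n ≤ m → ‖u m - x‖ ^ 2 ≤ ‖u n - x‖ ^ 2 + ∑ k ∈ Finset.Ico n m, ε k := by
  intro n m hnm
  induction m, hnm using Nat.le_induction with
  | base => simp
  | succ m hnm ih =>
    calc ‖u (m+1) - x‖^2 ≤ ‖u m - x‖^2 + ε m := h m
    _ ≤ ‖u n - x‖^2 + ∑ k ∈ Finset.Ico n m, ε k + ε m := by linarith
    _ = ‖u n - x‖^2 + ∑ k ∈ Finset.Ico n (m+1), ε k := by
        rw [Finset.sum_Ico_succ_top hnm]; ring

private lemma sq_conv' {H : Type*} [NormedAddCommGroup H] [InnerProductSpace ℝ H]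
    (u : ℕ → H) (ε : ℕ → ℝ) (l : ℝ)
    (hl : Tendsto (fun N => ∑ n ∈ Finset.range N, ε n) atTop (nhds l))
    (c : H) (h : ∀ n : ℕ, ‖u (n + 1) - c‖ ^ 2 ≤ ‖u n - c‖ ^ 2 + ε n) :
    ∃ L : ℝ, Tendsto (fun n => ‖u n - c‖ ^ 2) atTop (nhds L) := by
  set s : ℕ → ℝ := fun N => ∑ n ∈ Finset.range N, ε n with hs
  set f : ℕ → ℝ := fun n => ‖u n - c‖ ^ 2 - s n with hf
  have hanti : Antitone f := by
    apply antitone_nat_of_succ_le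
    intro n
    have hsucc : s (n + 1) = s n + ε n := Finset.sum_range_succ ε n
    have := h n
    simp only [hf]
    linarith
  obtain ⟨M, hM⟩ := hl.bddAbove_range
  have hbdd : BddBelow (Set.range f) := by
    refine ⟨-M, ?_⟩
    rintro y ⟨n, rfl⟩
    have h1 : s n ≤ M := hM ⟨n, rfl⟩
    have h2 : (0:ℝ) ≤ ‖u n - c‖ ^ 2 := by positivity
    simp only [hf]
    linarith
  have hfconv : Tendsto f atTop (nhds (⨅ n, f n)) := tendsto_atTop_ciInf hanti hbdd
  refine ⟨(⨅ n, f n) + l, ?_⟩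
  have := hfconv.add hl
  convert this using 2 with n
  simp [hf]

theorem stmt_7 {H : Type*} [NormedAddCommGroup H] [InnerProductSpace ℝ H]
    [CompleteSpace H] (C : Set H) (hC : C.Nonempty) (u : ℕ → H) (ε : ℕ → ℝ)
    (hε : ∃ l : ℝ, Tendsto (fun N => ∑ n ∈ Finset.range N, ε n) atTop (nhds l))
    (hfejer : ∀ c ∈ C, ∀ n : ℕ, ‖u (n + 1) - c‖ ^ 2 ≤ ‖u n - c‖ ^ 2 + ε n) :
    (∀ c ∈ C, ∃ l : ℝ, Tendsto (fun n => ‖u n - c‖) atTop (nhds l)) ∧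
    ((interior C).Nonempty → ∃ w : H, Tendsto u atTop (nhds w)) := by
  obtain ⟨l, hl⟩ := hε
  constructor
  · intro c hc
    obtain ⟨L, hL⟩ := sq_conv' u ε l hl c (hfejer c hc)
    refine ⟨Real.sqrt L, ?_⟩
    have : Tendsto (fun n => Real.sqrt (‖u n - c‖ ^ 2)) atTop (nhds (Real.sqrt L)) :=
      (Real.continuous_sqrt.continuousAt).tendsto.comp hL
    convert this using 2 with n
    rw [Real.sqrt_sq (norm_nonneg _)]
  · rintro ⟨c, hcint⟩
    have hCnhds : C ∈ nhds c := mem_interior_iff_mem_nhds.mp hcint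
    obtain ⟨r, hr, hball⟩ := Metric.mem_nhds_iff.mp hCnhds
    set r' : ℝ := r / 2 with hr'
    have hr'pos : 0 < r' := by positivity
    have hcC : c ∈ C := hball (Metric.mem_ball_self hr)
    set s : ℕ → ℝ := fun N => ∑ n ∈ Finset.range N, ε n with hs
    have hsum : ∀ n m : ℕ, n ≤ m → ∑ k ∈ Finset.Ico n m, ε k = s m - s n := by
      intro n m hnm
      rw [hs]
      rw [Finset.sum_Ico_eq_sub ε hnm]
    -- key inequality
    have key : ∀ n m : ℕ, n ≤ m →
        2 * r' * ‖u m - u n‖ ≤ ‖u n - c‖ ^ 2 - ‖u m - c‖ ^ 2 + (s m - s n) := by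
      intro n m hnm
      by_cases hne : u m = u n
      · have := telescope' u ε c (hfejer c hcC) n m hnm
        rw [hsum n m hnm] at this
        rw [hne] at this
        simp [hne]
        linarith
      · set d : H := u m - u n with hd
        have hdne : d ≠ 0 := sub_ne_zero.mpr hne
        have hdnorm : ‖d‖ ≠ 0 := norm_ne_zero_iff.mpr hdne
        set v : H := ‖d‖⁻¹ • d with hv
        have hvnorm : ‖v‖ = 1 := by
          rw [hv, norm_smul, norm_inv, norm_norm, inv_mul_cancel₀ hdnorm]
        set x : H := c - r' • v with hx
        have hxC : x ∈ C := by
          apply hball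
          rw [Metric.mem_ball, dist_eq_norm, hx]
          simp only [sub_sub_cancel_left]
          rw [norm_neg, norm_smul, hvnorm, Real.norm_eq_abs, abs_of_pos hr'pos, mul_one]
          rw [hr']; linarith
        have htel := telescope' u ε x (hfejer x hxC) n m hnm
        rw [hsum n m hnm] at htel
        have hexp : ∀ k : ℕ, ‖u k - x‖ ^ 2
            = ‖u k - c‖ ^ 2 + 2 * (r' * ⟪u k - c, v⟫) + r' ^ 2 := by
          intro k
          have : u k - x = (u k - c) + r' • v := by rw [hx]; abel
          rw [this, norm_add_sq_real, real_inner_smul_right, norm_smul, hvnorm,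
            Real.norm_eq_abs, abs_of_pos hr'pos, mul_one]
        rw [hexp m, hexp n] at htel
        have hinner : ⟪u m - c, v⟫ - ⟪u n - c, v⟫ = ‖d‖ := by
          rw [← inner_sub_left]
          have : u m - c - (u n - c) = d := by rw [hd]; abel
          rw [this, hv, real_inner_smul_right, real_inner_self_eq_norm_sq]
          field_simp
        nlinarith [hinner]
    -- Cauchy sequence
    obtain ⟨L, hL⟩ := sq_conv' u ε l hl c (hfejer c hcC)
    have haC : CauchySeq (fun n => ‖u n - c‖ ^ 2) := hL.cauchySeq
    have hsC : CauchySeq s := hl.cauchySeq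
    have hcauchy : CauchySeq u := by
      rw [Metric.cauchySeq_iff]
      intro δ hδ
      have hδ' : 0 < r' * δ := by positivity
      obtain ⟨N₁, hN₁⟩ := Metric.cauchySeq_iff.mp haC (r' * δ) hδ'
      obtain ⟨N₂, hN₂⟩ := Metric.cauchySeq_iff.mp hsC (r' * δ) hδ'
      refine ⟨max N₁ N₂, ?_⟩
      have main : ∀ n m : ℕ, max N₁ N₂ ≤ n → max N₁ N₂ ≤ m → n ≤ m →
          dist (u m) (u n) < δ := by
        intro n m hn hm hnm
        have h1 := hN₁ m (le_trans (le_max_left _ _) hm) n (le_trans (le_max_left _ _) hn)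
        have h2 := hN₂ m (le_trans (le_max_right _ _) hm) n (le_trans (le_max_right _ _) hn)
        rw [Real.dist_eq] at h1 h2
        have hk := key n m hnm
        rw [dist_eq_norm]
        have hub : ‖u n - c‖ ^ 2 - ‖u m - c‖ ^ 2 + (s m - s n) < 2 * (r' * δ) := by
          have := abs_lt.mp h1
          have := abs_lt.mp h2
          linarith [this.1, this.2]
        nlinarith [norm_nonneg (u m - u n)]
      intro m hm n hn
      rcases le_total n m with h | h
      · exact main n m hn hm h
      · rw [dist_comm]; exact main m n hm hn h
    obtain ⟨w, hw⟩ := cauchySeq_tendsto_of_complete hcauchy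
    exact ⟨w, hw⟩
end

section
/- Suppose τ_1 ≥ 1 and for all n, τ_n ≤ τ_{n+1} ≤ (1 + √(1 + 4τ_n²))/2. Then for every n ≥ 1, τ_n ≤ τ_1(n + √n)/2; consequently limsup (τ_n/n) ≤ τ_1/2. -/
open Filter

theorem stmt_9 (τ : ℕ → ℝ) (h1 : 1 ≤ τ 1)
    (h2 : ∀ n, 1 ≤ n → τ n ≤ τ (n + 1) ∧
      τ (n + 1) ≤ (1 + Real.sqrt (1 + 4 * τ n ^ 2)) / 2) :
    (∀ n : ℕ, 1 ≤ n → τ n ≤ τ 1 * ((n : ℝ) + Real.sqrt n) / 2) ∧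
    limsup (fun n : ℕ => τ n / n) atTop ≤ τ 1 / 2 := by
  have key : ∀ n : ℕ, 1 ≤ n → 1 ≤ τ n ∧ τ n ≤ τ 1 * ((n : ℝ) + Real.sqrt n) / 2 := by
    intro n hn
    induction n with
    | zero => omega
    | succ m ih =>
      rcases Nat.lt_or_ge m 1 with h | hm
      · have : m = 0 := by omega
        subst this
        norm_num [Real.sqrt_one]
        linarith
      · obtain ⟨ihl, ihr⟩ := ih hm
        obtain ⟨hmono, hrec⟩ := h2 m hm
        refine ⟨le_trans ihl hmono, ?_⟩
        have hsm : Real.sqrt m ^ 2 = m := Real.sq_sqrt (by positivity)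
        have hsm1 : Real.sqrt (m + 1) ^ 2 = (m : ℝ) + 1 := Real.sq_sqrt (by positivity)
        have hle : Real.sqrt m ≤ Real.sqrt ((m : ℝ) + 1) :=
          Real.sqrt_le_sqrt (by linarith)
        have hsm0 : 0 ≤ Real.sqrt m := Real.sqrt_nonneg _
        have hm1 : (1 : ℝ) ≤ m := by exact_mod_cast hm
        have hsq : 1 + 4 * τ m ^ 2 ≤ (τ 1 * ((m : ℝ) + Real.sqrt ((m : ℝ) + 1))) ^ 2 := by
          have e1 : 0 ≤ (τ 1 * ((m:ℝ) + Real.sqrt m) / 2 - τ m) *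
              (τ 1 * ((m:ℝ) + Real.sqrt m) / 2 + τ m) := by
            apply mul_nonneg (by linarith)
            nlinarith
          have e2 : 0 ≤ (τ 1)^2 * ((m:ℝ) * (Real.sqrt ((m:ℝ)+1) - Real.sqrt m)) :=
            mul_nonneg (sq_nonneg _) (mul_nonneg (by linarith) (by linarith))
          nlinarith [sq_nonneg (τ 1 - 1), e1, e2]
        have hroot : Real.sqrt (1 + 4 * τ m ^ 2) ≤ τ 1 * ((m : ℝ) + Real.sqrt ((m : ℝ) + 1)) := by
          have := Real.sqrt_le_sqrt hsq
          rwa [Real.sqrt_sq (by positivity)] at this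
        push_cast
        linarith
  refine ⟨fun n hn => (key n hn).2, ?_⟩
  have hg : Tendsto (fun n : ℕ => τ 1 / 2 + τ 1 / 2 * (Real.sqrt n)⁻¹) atTop (nhds (τ 1 / 2)) := by
    have hs : Tendsto (fun n : ℕ => Real.sqrt n) atTop atTop := by
      apply tendsto_atTop_atTop.mpr
      intro b
      refine ⟨⌈b^2⌉₊, fun n hn => ?_⟩
      rcases le_or_gt b 0 with hb | hb
      · exact hb.trans (Real.sqrt_nonneg _)
      · rw [Real.le_sqrt hb.le (Nat.cast_nonneg n)]
        calc b^2 ≤ ⌈b^2⌉₊ := Nat.le_ceil _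
          _ ≤ n := by exact_mod_cast hn
    have h0 : Tendsto (fun n : ℕ => (Real.sqrt n)⁻¹) atTop (nhds 0) :=
      hs.inv_tendsto_atTop
    have := (tendsto_const_nhds (x := τ 1 / 2) (f := atTop)).add ((tendsto_const_nhds (x := τ 1 / 2)).mul h0)
    simpa using this
  have hle : ∀ᶠ n : ℕ in atTop, τ n / n ≤ τ 1 / 2 + τ 1 / 2 * (Real.sqrt n)⁻¹ := by
    filter_upwards [eventually_ge_atTop 1] with n hn
    have hn0 : (0:ℝ) < n := by exact_mod_cast hn
    have hsn : 0 < Real.sqrt n := Real.sqrt_pos.mpr hn0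
    have hb := (key n hn).2
    have hsq : Real.sqrt n * Real.sqrt n = (n : ℝ) := Real.mul_self_sqrt hn0.le
    rw [div_le_iff₀ hn0]
    have : (τ 1 / 2 + τ 1 / 2 * (Real.sqrt n)⁻¹) * n = τ 1 * ((n : ℝ) + Real.sqrt n) / 2 := by
      field_simp
      nlinarith [hsq]
    rw [this]; exact hb
  have h0f : ∀ᶠ n : ℕ in atTop, (0:ℝ) ≤ τ n / n := by
    filter_upwards [eventually_ge_atTop 1] with n hn
    have hn0 : (0:ℝ) < n := by exact_mod_cast hn
    exact div_nonneg (by linarith [(key n hn).1]) hn0.le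
  calc limsup (fun n : ℕ => τ n / n) atTop
      ≤ limsup (fun n : ℕ => τ 1 / 2 + τ 1 / 2 * (Real.sqrt n)⁻¹) atTop := by
        exact limsup_le_limsup hle
          (isCoboundedUnder_le_of_eventually_le atTop h0f)
          hg.isBoundedUnder_le
    _ = τ 1 / 2 := hg.limsup_eq
end

section
/- Suppose τ_1 ≥ 1, τ_n ≤ τ_{n+1} ≤ (1 + √(1 + 4τ_n²))/2 for all n, and τ_n → +∞. Then (τ_n − 1)/τ_{n+1} → 1. -/
open Filter

theorem stmt_10 (τ : ℕ → ℝ) (h1 : 1 ≤ τ 1)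
    (h2 : ∀ n, 1 ≤ n → τ n ≤ τ (n + 1) ∧
      τ (n + 1) ≤ (1 + Real.sqrt (1 + 4 * τ n ^ 2)) / 2)
    (hlim : Tendsto τ atTop atTop) :
    Tendsto (fun n => (τ n - 1) / τ (n + 1)) atTop (nhds 1) := by
  -- τ n ≥ 1 for n ≥ 1
  have hge : ∀ n, 1 ≤ n → 1 ≤ τ n := by
    intro n hn
    induction n with
    | zero => omega
    | succ m ih =>
      rcases Nat.lt_or_ge 1 (m + 1) with h | h
      · have hm : 1 ≤ m := by omega
        exact le_trans (ih hm) (h2 m hm).1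
      · have : m + 1 = 1 := by omega
        rw [this]; exact h1
  -- τ (n+1) ≤ τ n + 1
  have hub : ∀ n, 1 ≤ n → τ (n + 1) ≤ τ n + 1 := by
    intro n hn
    have h0 : (1 : ℝ) ≤ τ n := hge n hn
    have hs : Real.sqrt (1 + 4 * τ n ^ 2) ≤ 2 * τ n + 1 := by
      have : (1 + 4 * τ n ^ 2) ≤ (2 * τ n + 1) ^ 2 := by nlinarith
      calc Real.sqrt (1 + 4 * τ n ^ 2) ≤ Real.sqrt ((2 * τ n + 1) ^ 2) :=
            Real.sqrt_le_sqrt this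
        _ = 2 * τ n + 1 := Real.sqrt_sq (by linarith)
    have := (h2 n hn).2
    linarith
  -- lower bound sequence tends to 1
  have htend1 : Tendsto (fun n => τ n + 1) atTop atTop :=
    tendsto_atTop_add_const_right _ 1 hlim
  have hlow : Tendsto (fun n => (τ n - 1) / (τ n + 1)) atTop (nhds 1) := by
    have h0 : Tendsto (fun n => 1 - 2 * (τ n + 1)⁻¹) atTop (nhds 1) := by
      have := htend1.inv_tendsto_atTop
      have h2' : Tendsto (fun n => 2 * (τ n + 1)⁻¹) atTop (nhds 0) := by
        simpa using this.const_mul (2 : ℝ)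
      simpa using (tendsto_const_nhds (x := (1:ℝ))).sub h2'
    refine h0.congr' ?_
    filter_upwards [eventually_ge_atTop 1] with n hn
    have h1' : (1 : ℝ) ≤ τ n := hge n hn
    have : τ n + 1 ≠ 0 := by linarith
    field_simp
    ring
  have hup : Tendsto (fun n => (τ n - 1) / τ n) atTop (nhds 1) := by
    have h0 : Tendsto (fun n => 1 - (τ n)⁻¹) atTop (nhds 1) := by
      have := hlim.inv_tendsto_atTop
      simpa using (tendsto_const_nhds (x := (1:ℝ))).sub this
    refine h0.congr' ?_
    filter_upwards [eventually_ge_atTop 1] with n hn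
    have h1' : (1 : ℝ) ≤ τ n := hge n hn
    have : τ n ≠ 0 := by linarith
    field_simp
  refine tendsto_of_tendsto_of_tendsto_of_le_of_le' hlow hup ?_ ?_
  · filter_upwards [eventually_ge_atTop 1] with n hn
    have h1' : (1 : ℝ) ≤ τ n := hge n hn
    have h2' : τ (n + 1) ≤ τ n + 1 := hub n hn
    have h3' : 1 ≤ τ (n + 1) := hge (n + 1) (by omega)
    gcongr <;> linarith
  · filter_upwards [eventually_ge_atTop 1] with n hn
    have h1' : (1 : ℝ) ≤ τ n := hge n hn
    have h2' : τ n ≤ τ (n + 1) := (h2 n hn).1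
    gcongr <;> linarith
end

section
/- Let τ_1 = 1 and τ_{n+1} = (1 + √(1 + 4τ_n²))/2. Then n·((τ_n − 1)/τ_{n+1} − 1 + 3/n) → 0 as n → ∞; that is, (τ_n − 1)/τ_{n+1} = 1 − 3/n + o(1/n). -/
open Filter

set_option maxHeartbeats 1000000 in
theorem stmt_12 (τ : ℕ → ℝ) (h1 : τ 1 = 1)
    (hrec : ∀ n, 1 ≤ n → τ (n + 1) = (1 + Real.sqrt (1 + 4 * τ n ^ 2)) / 2) :
    Tendsto (fun n : ℕ => (n : ℝ) * ((τ n - 1) / τ (n + 1) - 1 + 3 / n))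
      atTop (nhds 0) := by
  -- lower bound
  have hlow : ∀ n : ℕ, 1 ≤ n → ((n : ℝ) + 1) / 2 ≤ τ n := by
    intro n hn
    induction n, hn using Nat.le_induction with
    | base => simp [h1]
    | succ n hn ih =>
      have htpos : (0:ℝ) < τ n := by
        have : (1:ℝ) ≤ ((n:ℝ)+1)/2 := by
          have : (1:ℝ) ≤ (n:ℝ) := by exact_mod_cast hn
          linarith
        linarith
      have hs : 2 * τ n ≤ Real.sqrt (1 + 4 * τ n ^ 2) := by
        have h2 : (2 * τ n) ^ 2 ≤ 1 + 4 * τ n ^ 2 := by nlinarith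
        calc 2 * τ n = Real.sqrt ((2 * τ n)^2) := by
              rw [Real.sqrt_sq (by linarith)]
          _ ≤ _ := Real.sqrt_le_sqrt h2
      rw [hrec n hn]
      push_cast
      linarith
  -- log step
  have hlog : ∀ n : ℕ, 1 ≤ n → 1 / ((n:ℝ) + 1) ≤ Real.log ((n:ℝ)+1) - Real.log n := by
    intro n hn
    have hn1 : (1:ℝ) ≤ (n:ℝ) := by exact_mod_cast hn
    have hpos : (0:ℝ) < (n:ℝ)/((n:ℝ)+1) := by positivity
    have h := Real.log_le_sub_one_of_pos hpos
    rw [Real.log_div (by linarith) (by linarith)] at h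
    have heq : (n:ℝ)/((n:ℝ)+1) - 1 = -(1/((n:ℝ)+1)) := by field_simp; ring
    linarith [heq ▸ h]
  -- upper bound
  have hup : ∀ n : ℕ, 1 ≤ n → τ n ≤ ((n : ℝ) + 1) / 2 + Real.log n / 2 := by
    intro n hn
    induction n, hn using Nat.le_induction with
    | base => simp [h1]
    | succ n hn ih =>
      have hn1 : (1:ℝ) ≤ (n:ℝ) := by exact_mod_cast hn
      have htlow := hlow n hn
      have htpos : (1:ℝ) ≤ τ n := by linarith
      have hs : Real.sqrt (1 + 4 * τ n ^ 2) ≤ 2 * τ n + 1 / (4 * τ n) := by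
        have h2 : 1 + 4 * τ n ^ 2 ≤ (2 * τ n + 1 / (4 * τ n)) ^ 2 := by
          have : (0:ℝ) < τ n := by linarith
          rw [add_sq]
          have h3 : (0:ℝ) ≤ (1 / (4 * τ n))^2 := by positivity
          have h4 : 2 * (2 * τ n) * (1 / (4 * τ n)) = 1 := by field_simp; ring
          nlinarith
        calc Real.sqrt (1 + 4 * τ n ^ 2) ≤ Real.sqrt ((2 * τ n + 1 / (4 * τ n))^2) :=
              Real.sqrt_le_sqrt h2
          _ = 2 * τ n + 1 / (4 * τ n) := Real.sqrt_sq (by positivity)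
      have hinv : 1 / (4 * τ n) ≤ 1 / (2 * ((n:ℝ)+1)) := by
        apply div_le_div_of_nonneg_left (by norm_num) (by linarith) ?_
        linarith
      have hlg := hlog n hn
      have hd : (0:ℝ) ≤ Real.log ((n:ℝ)+1) - Real.log n := le_trans (by positivity) hlg
      rw [hrec n hn]
      push_cast
      have : 1 / (2 * ((n:ℝ)+1)) ≤ (Real.log ((n:ℝ)+1) - Real.log n) / 2 := by
        have heq : 1 / (2*((n:ℝ)+1)) = (1/((n:ℝ)+1))/2 := by
          rw [eq_div_iff (by norm_num)]
          field_simp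
        linarith
      linarith
  -- squeeze
  have hg : Tendsto (fun n : ℕ => (6 + 3 * Real.log ((n:ℝ)+1)) / ((n:ℝ)+2)) atTop (nhds 0) := by
    have h1' : Tendsto (fun n : ℕ => 6 / ((n:ℝ)+2)) atTop (nhds 0) := by
      apply Tendsto.div_atTop tendsto_const_nhds
      apply tendsto_atTop_add_const_right
      exact tendsto_natCast_atTop_atTop
    have h2' : Tendsto (fun n : ℕ => Real.log ((n:ℝ)+1) / (((n:ℝ)+1)+1)) atTop (nhds 0) := by
      have hb := Real.tendsto_pow_log_div_mul_add_atTop 1 1 1 one_ne_zero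
      have hcomp : Tendsto (fun n : ℕ => (n:ℝ)+1) atTop atTop :=
        tendsto_atTop_add_const_right _ _ tendsto_natCast_atTop_atTop
      have := hb.comp hcomp
      simpa [Function.comp_def] using this
    have : Tendsto (fun n : ℕ => 6 / ((n:ℝ)+2) + 3 * (Real.log ((n:ℝ)+1) / (((n:ℝ)+1)+1)))
        atTop (nhds 0) := by
      have := h1'.add (h2'.const_mul 3)
      simpa using this
    convert this using 2 with n
    have hne : ((n:ℝ)+2) ≠ 0 := by positivity
    field_simp
    ring
  apply squeeze_zero' (g := fun n : ℕ => (6 + 3 * Real.log ((n:ℝ)+1)) / ((n:ℝ)+2))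
    ?_ ?_ hg
  · filter_upwards [eventually_ge_atTop 1] with n hn
    have hn1 : (1:ℝ) ≤ (n:ℝ) := by exact_mod_cast hn
    have ht1 := hlow n hn
    have ht2 := hup n hn
    have hu1 : ((n:ℝ)+2)/2 ≤ τ (n+1) := by
      have := hlow (n+1) (by omega)
      push_cast at this
      linarith
    have hu2 : τ (n+1) ≤ ((n:ℝ)+2)/2 + Real.log ((n:ℝ)+1) / 2 := by
      have := hup (n+1) (by omega)
      push_cast at this
      linarith
    have htpos : (1:ℝ) ≤ τ n := by linarith
    have hupos : (0:ℝ) < τ (n+1) := by linarith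
    -- upper bound on τ(n+1) − τ n
    have hs : Real.sqrt (1 + 4 * τ n ^ 2) ≤ 2 * τ n + 1 / (4 * τ n) := by
      have h2 : 1 + 4 * τ n ^ 2 ≤ (2 * τ n + 1 / (4 * τ n)) ^ 2 := by
        have : (0:ℝ) < τ n := by linarith
        rw [add_sq]
        have h3 : (0:ℝ) ≤ (1 / (4 * τ n))^2 := by positivity
        have h4 : 2 * (2 * τ n) * (1 / (4 * τ n)) = 1 := by field_simp; ring
        nlinarith
      calc Real.sqrt (1 + 4 * τ n ^ 2) ≤ Real.sqrt ((2 * τ n + 1 / (4 * τ n))^2) :=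
            Real.sqrt_le_sqrt h2
        _ = 2 * τ n + 1 / (4 * τ n) := Real.sqrt_sq (by positivity)
    have hs2 : 2 * τ n ≤ Real.sqrt (1 + 4 * τ n ^ 2) := by
      have h2 : (2 * τ n) ^ 2 ≤ 1 + 4 * τ n ^ 2 := by nlinarith
      calc 2 * τ n = Real.sqrt ((2 * τ n)^2) := by rw [Real.sqrt_sq (by linarith)]
        _ ≤ _ := Real.sqrt_le_sqrt h2
    have hrecn := hrec n hn
    have hud : τ n + 1/2 ≤ τ (n+1) := by rw [hrecn]; linarith
    have hud2 : τ (n+1) ≤ τ n + 1/2 + 1/(8 * τ n) := by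
      rw [hrecn]
      have : 1 / (4 * τ n) / 2 = 1 / (8 * τ n) := by ring
      linarith
    -- the number whose sign we need
    have hnpos : (0:ℝ) < (n:ℝ) := by linarith
    have key : (n : ℝ) * ((τ n - 1) / τ (n + 1) - 1 + 3 / (n:ℝ))
        = ((n:ℝ) * (τ n - 1 - τ (n+1)) + 3 * τ (n+1)) / τ (n+1) := by
      field_simp
    rw [key]
    apply div_nonneg ?_ (le_of_lt hupos)
    have hinv : (n:ℝ) / (8 * τ n) ≤ 1/4 := by
      rw [div_le_iff₀ (by linarith)]
      linarith
    have : (n:ℝ) * (τ n - 1 - τ (n+1)) ≥ (n:ℝ) * (-3/2 - 1/(8 * τ n)) := by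
      apply mul_le_mul_of_nonneg_left ?_ (le_of_lt hnpos)
      linarith
    have hx : (n:ℝ) * (-3/2 - 1/(8*τ n)) = -3/2 * n - (n:ℝ)/(8 * τ n) := by ring
    nlinarith
  · filter_upwards [eventually_ge_atTop 1] with n hn
    have hn1 : (1:ℝ) ≤ (n:ℝ) := by exact_mod_cast hn
    have ht1 := hlow n hn
    have hu1 : ((n:ℝ)+2)/2 ≤ τ (n+1) := by
      have := hlow (n+1) (by omega)
      push_cast at this
      linarith
    have hu2 : τ (n+1) ≤ ((n:ℝ)+2)/2 + Real.log ((n:ℝ)+1) / 2 := by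
      have := hup (n+1) (by omega)
      push_cast at this
      linarith
    have htpos : (1:ℝ) ≤ τ n := by linarith
    have hupos : (0:ℝ) < τ (n+1) := by linarith
    have hnpos : (0:ℝ) < (n:ℝ) := by linarith
    have hs2 : 2 * τ n ≤ Real.sqrt (1 + 4 * τ n ^ 2) := by
      have h2 : (2 * τ n) ^ 2 ≤ 1 + 4 * τ n ^ 2 := by nlinarith
      calc 2 * τ n = Real.sqrt ((2 * τ n)^2) := by rw [Real.sqrt_sq (by linarith)]
        _ ≤ _ := Real.sqrt_le_sqrt h2
    have hud : τ n + 1/2 ≤ τ (n+1) := by rw [hrec n hn]; linarith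
    have key : (n : ℝ) * ((τ n - 1) / τ (n + 1) - 1 + 3 / (n:ℝ))
        = ((n:ℝ) * (τ n - 1 - τ (n+1)) + 3 * τ (n+1)) / τ (n+1) := by
      field_simp
    rw [key]
    have hL : (0:ℝ) ≤ Real.log ((n:ℝ)+1) := Real.log_nonneg (by linarith)
    have hNub : (n:ℝ) * (τ n - 1 - τ (n+1)) + 3 * τ (n+1)
        ≤ 3 + 3/2 * Real.log ((n:ℝ)+1) := by
      have h5 : (n:ℝ) * (τ n - 1 - τ (n+1)) ≤ (n:ℝ) * (-3/2) := by
        apply mul_le_mul_of_nonneg_left ?_ (le_of_lt hnpos)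
        linarith
      nlinarith
    calc ((n:ℝ) * (τ n - 1 - τ (n+1)) + 3 * τ (n+1)) / τ (n+1)
        ≤ (3 + 3/2 * Real.log ((n:ℝ)+1)) / (((n:ℝ)+2)/2) := by
          apply div_le_div₀ (by positivity) hNub (by positivity) hu1
      _ = (6 + 3 * Real.log ((n:ℝ)+1)) / ((n:ℝ)+2) := by
          rw [div_div_eq_mul_div]
          congr 1
          ring
end

section
/- Suppose τ_1 ≥ 1 and τ_n ≤ τ_{n+1} ≤ (1 + √(1 + 4τ_n²))/2 for all n. Fix ρ > 1 and set μ_n := (τ_n + ρ − 1)/ρ. Then for every n, μ_{n+1}² − μ_n² ≤ ((1 + √5)/(2ρ)) μ_{n+1}. In particular, if ρ > (1 + √5)/2, then (μ_n) satisfies μ_{n+1}² − μ_n² ≤ δ μ_{n+1} with δ := (1+√5)/(2ρ) ∈ (0,1). -/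
open Filter

theorem stmt_14 (τ : ℕ → ℝ) (h1 : 1 ≤ τ 1)
    (h2 : ∀ n, 1 ≤ n → τ n ≤ τ (n + 1) ∧
      τ (n + 1) ≤ (1 + Real.sqrt (1 + 4 * τ n ^ 2)) / 2)
    (ρ : ℝ) (hρ : 1 < ρ) (μ : ℕ → ℝ) (hμ : ∀ n, μ n = (τ n + ρ - 1) / ρ) :
    (∀ n, 1 ≤ n →
      μ (n + 1) ^ 2 - μ n ^ 2 ≤ ((1 + Real.sqrt 5) / (2 * ρ)) * μ (n + 1)) ∧
    ((1 + Real.sqrt 5) / 2 < ρ →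
      0 < (1 + Real.sqrt 5) / (2 * ρ) ∧ (1 + Real.sqrt 5) / (2 * ρ) < 1) := by
  have h5 : (2:ℝ) ≤ Real.sqrt 5 := by
    have : Real.sqrt 4 ≤ Real.sqrt 5 := Real.sqrt_le_sqrt (by norm_num)
    have h4 : Real.sqrt 4 = 2 := by
      rw [show (4:ℝ) = 2^2 by norm_num, Real.sqrt_sq]; norm_num
    linarith
  have h5' : Real.sqrt 5 < 3 := by
    have : Real.sqrt 5 < Real.sqrt 9 := by
      apply Real.sqrt_lt_sqrt <;> norm_num
    have h9 : Real.sqrt 9 = 3 := by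
      rw [show (9:ℝ) = 3^2 by norm_num, Real.sqrt_sq]; norm_num
    linarith
  have hτ : ∀ n, 1 ≤ n → 1 ≤ τ n := by
    intro n hn
    induction n with
    | zero => omega
    | succ k ih =>
      rcases Nat.eq_or_lt_of_le hn with h | h
      · rw [← h]; simpa using h1
      · have hk : 1 ≤ k := by omega
        exact le_trans (ih hk) (h2 k hk).1
  constructor
  · intro n hn
    obtain ⟨hab, hb⟩ := h2 n hn
    have ha : 1 ≤ τ n := hτ n hn
    have hs : Real.sqrt (1 + 4 * τ n ^ 2) ≤ 2 * τ n + 1/4 := by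
      have := Real.sqrt_le_sqrt (show (1:ℝ) + 4 * τ n ^ 2 ≤ (2 * τ n + 1/4)^2 by nlinarith)
      rwa [Real.sqrt_sq (by linarith)] at this
    have hgap : τ (n+1) - τ n ≤ 5/8 := by linarith
    rw [hμ, hμ]
    have hρ0 : (0:ℝ) < ρ := by linarith
    rw [div_pow, div_pow, div_sub_div_same, div_mul_div_comm]
    rw [div_le_div_iff₀ (by positivity) (by positivity)]
    have hb1 : 1 ≤ τ (n+1) := le_trans ha hab
    have k1 : (0:ℝ) ≤ (1 + Real.sqrt 5)/4 - (τ (n+1) - τ n) := by linarith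
    have k2 : (0:ℝ) ≤ τ (n+1) + ρ - 1 := by linarith
    nlinarith [mul_nonneg (mul_nonneg k1 k2) (sq_nonneg ρ),
      mul_nonneg (sq_nonneg (τ (n+1) - τ n)) (sq_nonneg ρ)]
  · intro hφ
    have hρ0 : (0:ℝ) < ρ := by linarith
    constructor
    · positivity
    · rw [div_lt_one (by positivity)]; linarith
end

section
/- Let H be a real Hilbert space, f: H → ℝ convex and Fréchet differentiable with β-Lipschitz gradient, g: H → (−∞, +∞] convex, lower semicontinuous, proper, γ ∈ (0, 1/β], h := f + g, and T := prox_{γg} ∘ (Id − γ∇f). Then for all x, y ∈ H: γ⁻¹⟨y − Ty, x − y⟩ + (2γ)⁻¹‖y − Ty‖² ≤ h(x) − h(Ty). -/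
open Filter Topology

section Aux

variable {H : Type*} [NormedAddCommGroup H] [InnerProductSpace ℝ H] [CompleteSpace H]

lemma line_hasDerivAt_aux (f : H → ℝ) (f' : H → H) (hf : ∀ x, HasGradientAt f (f' x) x)
    (y d : H) (t : ℝ) :
    HasDerivAt (fun s : ℝ => f (y + s • d)) (inner ℝ (f' (y + t • d)) d : ℝ) t := by
  have h1 : HasDerivAt (fun s : ℝ => y + s • d) d t := by
    simpa using ((hasDerivAt_id t).smul_const d).const_add y
  have h2 := (hf (y + t • d)).hasFDerivAt.comp_hasDerivAt t h1
  simp [InnerProductSpace.toDual_apply_apply] at h2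
  exact h2

lemma descent_aux (f : H → ℝ) (f' : H → H) (β : ℝ) (hβ : 0 ≤ β)
    (hf : ∀ x, HasGradientAt f (f' x) x)
    (hlip : ∀ x y, ‖f' x - f' y‖ ≤ β * ‖x - y‖) (y p : H) :
    f p ≤ f y + inner ℝ (f' y) (p - y) + β / 2 * ‖p - y‖ ^ 2 := by
  set d := p - y with hd
  set ψ : ℝ → ℝ := fun t => f (y + t • d) - t * inner ℝ (f' y) d - β / 2 * t ^ 2 * ‖d‖ ^ 2 with hψ
  have hder : ∀ t : ℝ, HasDerivAt ψ
      ((inner ℝ (f' (y + t • d)) d : ℝ) - inner ℝ (f' y) d - β * t * ‖d‖ ^ 2) t := by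
    intro t
    have h1 := line_hasDerivAt_aux f f' hf y d t
    have h2 : HasDerivAt (fun t : ℝ => t * (inner ℝ (f' y) d : ℝ)) (inner ℝ (f' y) d : ℝ) t := by
      simpa using (hasDerivAt_id t).mul_const (inner ℝ (f' y) d : ℝ)
    have h3 : HasDerivAt (fun t : ℝ => β / 2 * t ^ 2 * ‖d‖ ^ 2) (β * t * ‖d‖ ^ 2) t := by
      have := ((hasDerivAt_pow 2 t).const_mul (β / 2)).mul_const (‖d‖ ^ 2)
      refine this.congr_deriv ?_
      ring
    exact (h1.sub h2).sub h3
  have hanti : AntitoneOn ψ (Set.Icc 0 1) := by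
    apply antitoneOn_of_deriv_nonpos (convex_Icc 0 1)
    · exact fun t _ => (hder t).continuousAt.continuousWithinAt
    · exact fun t _ => ((hder t).differentiableAt).differentiableWithinAt
    · intro t ht
      rw [interior_Icc] at ht
      rw [(hder t).deriv]
      have e1 : (inner ℝ (f' (y + t • d)) d : ℝ) - inner ℝ (f' y) d
          = inner ℝ (f' (y + t • d) - f' y) d := (inner_sub_left _ _ _).symm
      have e2 : (inner ℝ (f' (y + t • d) - f' y) d : ℝ) ≤ ‖f' (y + t • d) - f' y‖ * ‖d‖ :=
        real_inner_le_norm _ _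
      have e3 : ‖f' (y + t • d) - f' y‖ ≤ β * (t * ‖d‖) := by
        have := hlip (y + t • d) y
        simpa [norm_smul, abs_of_pos ht.1] using this
      have e4 : ‖f' (y + t • d) - f' y‖ * ‖d‖ ≤ β * (t * ‖d‖) * ‖d‖ :=
        mul_le_mul_of_nonneg_right e3 (norm_nonneg _)
      nlinarith [norm_nonneg d]
  have h01 := hanti (Set.left_mem_Icc.2 zero_le_one) (Set.right_mem_Icc.2 zero_le_one)
    zero_le_one
  have e0 : ψ 0 = f y := by simp [hψ]
  have e1 : ψ 1 = f p - inner ℝ (f' y) d - β / 2 * ‖d‖ ^ 2 := by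
    simp [hψ, hd]
  rw [e0, e1] at h01
  linarith

lemma grad_lower_aux (f : H → ℝ) (f' : H → H) (hfconv : ConvexOn ℝ Set.univ f)
    (hf : ∀ x, HasGradientAt f (f' x) x) (y x : H) :
    f y + inner ℝ (f' y) (x - y) ≤ f x := by
  set φ : ℝ → ℝ := fun t => f (y + t • (x - y)) with hφ
  have hd : HasDerivAt φ (inner ℝ (f' y) (x - y) : ℝ) 0 := by
    simpa using line_hasDerivAt_aux f f' hf y (x - y) 0
  have key : ∀ t ∈ Set.Ioc (0:ℝ) 1, slope φ 0 t ≤ f x - f y := by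
    intro t ht
    have heq : y + t • (x - y) = t • x + (1 - t) • y := by
      rw [smul_sub, sub_smul, one_smul]; abel
    have hc : f (t • x + (1 - t) • y) ≤ t * f x + (1 - t) * f y := by
      have h0 := hfconv.2 (Set.mem_univ x) (Set.mem_univ y) ht.1.le
        (by linarith [ht.2] : (0:ℝ) ≤ 1 - t) (by ring : t + (1 - t) = 1)
      simpa [smul_eq_mul] using h0
    have hφt : φ t ≤ t * f x + (1 - t) * f y := by
      show f (y + t • (x - y)) ≤ _
      rw [heq]; exact hc
    have hφ0 : φ 0 = f y := by simp [hφ]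
    rw [slope_def_field, hφ0, sub_zero]
    rw [div_le_iff₀ ht.1]
    linarith
  have htend : Tendsto (slope φ 0) (𝓝[>] 0) (𝓝 (inner ℝ (f' y) (x - y) : ℝ)) :=
    (hasDerivAt_iff_tendsto_slope.mp hd).mono_left
      (nhdsWithin_mono 0 (fun t ht => ne_of_gt ht))
  have hmem : Set.Ioc (0:ℝ) 1 ∈ 𝓝[>] (0:ℝ) :=
    Ioc_mem_nhdsGT_of_mem ⟨le_refl _, zero_lt_one⟩
  have := le_of_tendsto htend (Filter.eventually_of_mem hmem key)
  linarith

end Aux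

theorem stmt_15 {H : Type*} [NormedAddCommGroup H] [InnerProductSpace ℝ H]
    [CompleteSpace H]
    (f : H → ℝ) (f' : H → H) (g : H → EReal) (β γ : ℝ)
    (hβ : 0 < β) (hγ : 0 < γ) (hγβ : γ ≤ 1 / β)
    (hfconv : ConvexOn ℝ Set.univ f)
    (hf' : ∀ x, HasGradientAt f (f' x) x)
    (hlip : ∀ x y, ‖f' x - f' y‖ ≤ β * ‖x - y‖)
    (hgconv : ∀ x y : H, ∀ t : ℝ, 0 ≤ t → t ≤ 1 →
      g (t • x + (1 - t) • y) ≤ (t : EReal) * g x + ((1 - t : ℝ) : EReal) * g y)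
    (hglsc : LowerSemicontinuous g)
    (hgproper : ∃ x, g x ≠ ⊤)
    (hgnebot : ∀ x, g x ≠ ⊥)
    (T : H → H)
    (hT : ∀ x u : H,
      g (T x) + (((2 * γ)⁻¹ * ‖T x - (x - γ • f' x)‖ ^ 2 : ℝ) : EReal) ≤
      g u + (((2 * γ)⁻¹ * ‖u - (x - γ • f' x)‖ ^ 2 : ℝ) : EReal))
    (h : H → EReal) (hh : ∀ x, h x = (f x : EReal) + g x) :
    ∀ x y : H,
      ((γ⁻¹ * (inner ℝ (y - T y) (x - y) : ℝ) +
        (2 * γ)⁻¹ * ‖y - T y‖ ^ 2 : ℝ) : EReal) + h (T y) ≤ h x := by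
  intro x y
  set p := T y with hp
  set v := y - γ • f' y with hv
  set c : ℝ := (2 * γ)⁻¹ with hc
  have hcpos : 0 < c := by positivity
  -- g p is finite
  have hpt : g p ≠ ⊤ := by
    obtain ⟨x₀, hx₀⟩ := hgproper
    intro hcon
    have h1 := hT y x₀
    rw [← hp, ← hv, hcon] at h1
    rw [EReal.top_add_of_ne_bot (EReal.coe_ne_bot _)] at h1
    have h2 : g x₀ + ((c * ‖x₀ - v‖ ^ 2 : ℝ) : EReal) < ⊤ :=
      EReal.add_lt_top hx₀ (EReal.coe_ne_top _)
    exact absurd (top_le_iff.mp h1) h2.ne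
  obtain ⟨gp, hgp⟩ : ∃ r : ℝ, g p = (r : EReal) :=
    ⟨(g p).toReal, (EReal.coe_toReal hpt (hgnebot p)).symm⟩
  -- prox subgradient inequality
  have key : ∀ u : H, ∀ gu : ℝ, g u = (gu : EReal) →
      gp ≤ gu + γ⁻¹ * inner ℝ (p - v) (u - p) := by
    intro u gu hgu
    set A : ℝ := inner ℝ (p - v) (u - p) with hA
    set B : ℝ := ‖u - p‖ ^ 2 with hB
    have hBnn : 0 ≤ B := by positivity
    have main_t : ∀ t : ℝ, 0 < t → t ≤ 1 → gp ≤ gu + γ⁻¹ * A + c * t * B := by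
      intro t ht0 ht1
      have heqpt : t • u + (1 - t) • p = p + t • (u - p) := by
        rw [smul_sub, sub_smul, one_smul]; abel
      have hTt := hT y (p + t • (u - p))
      rw [← hp, ← hv] at hTt
      have hconv := hgconv u p t ht0.le ht1
      rw [heqpt, hgu, hgp] at hconv
      have hconv' : g (p + t • (u - p)) ≤ ((t * gu + (1 - t) * gp : ℝ) : EReal) := by
        refine hconv.trans_eq ?_
        rw [EReal.coe_add, EReal.coe_mul, EReal.coe_mul]
      have hchain : ((gp + c * ‖p - v‖ ^ 2 : ℝ) : EReal) ≤
          ((t * gu + (1 - t) * gp + c * ‖p + t • (u - p) - v‖ ^ 2 : ℝ) : EReal) := by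
        rw [EReal.coe_add, EReal.coe_add, ← hgp]
        calc g p + ((c * ‖p - v‖ ^ 2 : ℝ) : EReal)
            ≤ g (p + t • (u - p)) + ((c * ‖p + t • (u - p) - v‖ ^ 2 : ℝ) : EReal) := hTt
          _ ≤ ((t * gu + (1 - t) * gp : ℝ) : EReal)
              + ((c * ‖p + t • (u - p) - v‖ ^ 2 : ℝ) : EReal) :=
            add_le_add_left hconv' _
      have hreal : gp + c * ‖p - v‖ ^ 2 ≤
          t * gu + (1 - t) * gp + c * ‖p + t • (u - p) - v‖ ^ 2 :=
        EReal.coe_le_coe_iff.mp hchain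
      have hexp : ‖p + t • (u - p) - v‖ ^ 2
          = ‖p - v‖ ^ 2 + 2 * (t * A) + t ^ 2 * B := by
        have e0 : p + t • (u - p) - v = (p - v) + t • (u - p) := by abel
        rw [e0, norm_add_sq_real, real_inner_smul_right, norm_smul, mul_pow]
        simp only [hA, hB, Real.norm_eq_abs, sq_abs]
        try ring
      rw [hexp] at hreal
      have h2c : γ⁻¹ = 2 * c := by
        rw [hc, mul_inv]
        ring
      have hstep : t * gp ≤ t * (gu + γ⁻¹ * A + c * t * B) := by
        rw [h2c]
        nlinarith
      exact le_of_mul_le_mul_left hstep ht0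
    refine le_of_forall_pos_le_add fun ε hε => ?_
    have htpos : 0 < ε / (c * B + 1) := by positivity
    set t : ℝ := min 1 (ε / (c * B + 1)) with ht
    have ht0 : 0 < t := lt_min one_pos htpos
    have ht1 : t ≤ 1 := min_le_left _ _
    have hle := main_t t ht0 ht1
    have hbound : c * t * B ≤ ε := by
      have htle : t ≤ ε / (c * B + 1) := min_le_right _ _
      have h1 : c * t * B ≤ c * (ε / (c * B + 1)) * B := by
        have := mul_le_mul_of_nonneg_left htle hcpos.le
        nlinarith
      have h2 : c * (ε / (c * B + 1)) * B ≤ ε := by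
        have hpos : (0:ℝ) < c * B + 1 := by positivity
        have heq2 : c * (ε / (c * B + 1)) * B = ε * (c * B) / (c * B + 1) := by ring
        rw [heq2, div_le_iff₀ hpos]
        nlinarith
      linarith
    linarith
  -- handle g x = ⊤
  rw [hh x, hh p]
  by_cases hxt : g x = ⊤
  · rw [hxt, EReal.add_top_of_ne_bot (EReal.coe_ne_bot _)]
    exact le_top
  obtain ⟨gx, hgx⟩ : ∃ r : ℝ, g x = (r : EReal) :=
    ⟨(g x).toReal, (EReal.coe_toReal hxt (hgnebot x)).symm⟩
  rw [hgp, hgx]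
  have hmain : γ⁻¹ * (inner ℝ (y - p) (x - y) : ℝ) + c * ‖y - p‖ ^ 2 + (f p + gp)
      ≤ f x + gx := by
    set I1 : ℝ := inner ℝ (y - p) (x - y) with hI1
    set n : ℝ := ‖y - p‖ ^ 2 with hn
    set D1 : ℝ := inner ℝ (f' y) (p - y) with hD1
    set D2 : ℝ := inner ℝ (f' y) (x - y) with hD2
    have hnnn : 0 ≤ n := by positivity
    -- descent
    have hβ2c : β / 2 ≤ c := by
      have hβγ : β * γ ≤ 1 := by
        have h0 := mul_le_mul_of_nonneg_left hγβ hβ.le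
        rwa [mul_one_div, div_self hβ.ne'] at h0
      have h1 : β / 2 ≤ 1 / (2 * γ) := by
        rw [div_le_div_iff₀ (by norm_num) (by positivity)]
        nlinarith
      calc β / 2 ≤ 1 / (2 * γ) := h1
        _ = c := by rw [hc, one_div]
    have hdesc : f p ≤ f y + D1 + c * n := by
      have := descent_aux f f' β hβ.le hf' hlip y p
      have hpn : ‖p - y‖ ^ 2 = n := by rw [hn, norm_sub_rev]
      rw [hpn] at this
      nlinarith [mul_le_mul_of_nonneg_right hβ2c hnnn]
    have hgrad : f y + D2 ≤ f x := grad_lower_aux f f' hfconv hf' y x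
    -- subgradient
    have hkey := key x gx hgx
    have e1 : (inner ℝ (p - v) (x - p) : ℝ) = (-I1 - n) + γ * (D2 - D1) := by
      have epv : p - v = (p - y) + γ • f' y := by rw [hv]; abel
      have exp2 : x - p = (x - y) - (p - y) := by abel
      have t1 : (inner ℝ (p - v) (x - p) : ℝ)
          = inner ℝ (p - y) (x - p) + γ * inner ℝ (f' y) (x - p) := by
        rw [epv, inner_add_left, real_inner_smul_left]
      have t2 : (inner ℝ (p - y) (x - p) : ℝ)
          = inner ℝ (p - y) (x - y) - inner ℝ (p - y) (p - y) := by
        rw [exp2, inner_sub_right]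
      have t3 : (inner ℝ (p - y) (x - y) : ℝ) = -I1 := by
        have hpy : p - y = -(y - p) := by abel
        rw [hpy, inner_neg_left, hI1]
      have t4 : (inner ℝ (p - y) (p - y) : ℝ) = n := by
        rw [real_inner_self_eq_norm_sq, hn, norm_sub_rev]
      have t5 : (inner ℝ (f' y) (x - p) : ℝ) = D2 - D1 := by
        rw [exp2, inner_sub_right, hD2, hD1]
      rw [t1, t2, t3, t4, t5]
      try ring
    rw [e1] at hkey
    have e2 : γ⁻¹ * ((-I1 - n) + γ * (D2 - D1)) = γ⁻¹ * (-I1 - n) + (D2 - D1) := by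
      rw [mul_add, ← mul_assoc, inv_mul_cancel₀ hγ.ne', one_mul]
    rw [e2] at hkey
    have h2c : γ⁻¹ * (-I1 - n) = -(γ⁻¹ * I1) - 2 * (c * n) := by
      rw [hc, mul_inv]
      ring
    rw [h2c] at hkey
    linarith
  push_cast
  try exact_mod_cast hmain
end

section
/- Under the standing FISTA assumptions, let y, x_- ∈ H, τ, τ_+ ∈ [1, ∞), x := Ty, y_+ := x + ((τ−1)/τ_+)(x − x_-), x_+ := Ty_+. Then h(x_+) + (2γ)⁻¹‖x_+ − x‖² ≤ h(x) + ((τ−1)²/τ_+²)(2γ)⁻¹‖x − x_-‖². -/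
open Filter

open Topology

section AuxFista

variable {H : Type*} [NormedAddCommGroup H] [InnerProductSpace ℝ H] [CompleteSpace H]

lemma aux_line_deriv (f : H → ℝ) (f' : H → H)
    (hf' : ∀ x, HasGradientAt f (f' x) x) (a b : H) (t : ℝ) :
    HasDerivAt (fun s : ℝ => f (a + s • (b - a)))
      (inner ℝ (f' (a + t • (b - a))) (b - a) : ℝ) t := by
  have h1 : HasDerivAt (fun s : ℝ => a + s • (b - a)) (b - a) t := by
    simpa using ((hasDerivAt_id t).smul_const (b - a)).const_add a
  have h2 := ((hf' (a + t • (b - a))).hasFDerivAt).comp_hasDerivAt t h1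
  exact h2

lemma aux_grad_convex (f : H → ℝ) (f' : H → H) [CompleteSpace H]
    (hfconv : ConvexOn ℝ Set.univ f)
    (hf' : ∀ x, HasGradientAt f (f' x) x) (w u : H) :
    f w + inner ℝ (f' w) (u - w) ≤ f u := by
  have hd := aux_line_deriv f f' hf' w u 0
  simp only [zero_smul, add_zero] at hd
  -- slope tendsto
  have hslope : Tendsto (fun t : ℝ => (f (w + t • (u - w)) - f w) / t)
      (𝓝[>] (0:ℝ)) (𝓝 (inner ℝ (f' w) (u - w) : ℝ)) := by
    have := hasDerivAt_iff_tendsto_slope.1 hd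
    refine this.mono_left (nhdsWithin_mono _ ?_) |>.congr' ?_
    · intro t ht; exact ne_of_gt ht
    · filter_upwards [self_mem_nhdsWithin] with t ht
      simp [slope, (Set.mem_Ioi.1 ht).ne', vsub_eq_sub, div_eq_inv_mul]
  have hbound : ∀ᶠ t : ℝ in 𝓝[>] 0, (f (w + t • (u - w)) - f w) / t ≤ f u - f w := by
    filter_upwards [Ioo_mem_nhdsGT_of_mem (by norm_num : (0:ℝ) ∈ Set.Ico 0 1),
      self_mem_nhdsWithin] with t ht ht0
    have h1 : f (t • u + (1 - t) • w) ≤ t * f u + (1 - t) * f w :=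
      hfconv.2 (Set.mem_univ u) (Set.mem_univ w) ht.1.le (by linarith [ht.2]) (by ring)
    have heq : w + t • (u - w) = t • u + (1 - t) • w := by
      rw [smul_sub, sub_smul, one_smul]; abel
    rw [heq, div_le_iff₀ ht.1]
    nlinarith [h1]
  have := le_of_tendsto hslope hbound
  linarith

lemma aux_descent (f : H → ℝ) (f' : H → H) (β : ℝ)
    (hf' : ∀ x, HasGradientAt f (f' x) x)
    (hlip : ∀ x y, ‖f' x - f' y‖ ≤ β * ‖x - y‖) (a b : H) :
    f b ≤ f a + inner ℝ (f' a) (b - a) + β / 2 * ‖b - a‖ ^ 2 := by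
  set ψ : ℝ → ℝ := fun s =>
    f (a + s • (b - a)) - s * inner ℝ (f' a) (b - a) - β / 2 * s ^ 2 * ‖b - a‖ ^ 2 with hψ
  have hder : ∀ s : ℝ, HasDerivAt ψ
      ((inner ℝ (f' (a + s • (b - a))) (b - a) : ℝ) - inner ℝ (f' a) (b - a)
        - β * s * ‖b - a‖ ^ 2) s := by
    intro s
    have h1 := aux_line_deriv f f' hf' a b s
    have h2 : HasDerivAt (fun s : ℝ => s * (inner ℝ (f' a) (b - a) : ℝ))
        (inner ℝ (f' a) (b - a) : ℝ) s := by simpa using (hasDerivAt_id s).mul_const _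
    have h3 : HasDerivAt (fun s : ℝ => β / 2 * s ^ 2 * ‖b - a‖ ^ 2)
        (β * s * ‖b - a‖ ^ 2) s := by
      have := ((hasDerivAt_pow 2 s).const_mul (β / 2)).mul_const (‖b - a‖ ^ 2)
      exact this.congr_deriv (by ring)
    exact (h1.sub h2).sub h3
  have hmono : AntitoneOn ψ (Set.Icc 0 1) := by
    apply antitoneOn_of_deriv_nonpos (convex_Icc 0 1)
    · exact Continuous.continuousOn (by
        have : Continuous ψ := by
          have : Differentiable ℝ ψ := fun s => (hder s).differentiableAt
          exact this.continuous
        exact this)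
    · intro s hs
      exact (hder s).differentiableAt.differentiableWithinAt
    · intro s hs
      rw [interior_Icc] at hs
      rw [(hder s).deriv]
      have hcs : (inner ℝ (f' (a + s • (b - a)) - f' a) (b - a) : ℝ)
          ≤ ‖f' (a + s • (b - a)) - f' a‖ * ‖b - a‖ := real_inner_le_norm _ _
      have hl : ‖f' (a + s • (b - a)) - f' a‖ ≤ β * (s * ‖b - a‖) := by
        have := hlip (a + s • (b - a)) a
        simpa [norm_smul, abs_of_pos hs.1] using this
      rw [inner_sub_left] at hcs
      nlinarith [norm_nonneg (b - a), hs.1.le]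
  have := hmono (Set.mem_Icc.2 ⟨le_refl 0, zero_le_one⟩)
    (Set.mem_Icc.2 ⟨zero_le_one, le_refl 1⟩) zero_le_one
  simp only [hψ, zero_smul, add_zero, one_smul, zero_pow, one_pow] at this
  have heq : a + (b - a) = b := by abel
  rw [heq] at this
  nlinarith [this]

lemma aux_prox_ne_top (g : H → EReal) (T : H → H) (v' : H → H)
    (hgproper : ∃ x, g x ≠ ⊤) (hgnebot : ∀ x, g x ≠ ⊥) (c : ℝ)
    (hT : ∀ x u : H,
      g (T x) + ((c * ‖T x - v' x‖ ^ 2 : ℝ) : EReal) ≤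
      g u + ((c * ‖u - v' x‖ ^ 2 : ℝ) : EReal)) (w : H) : g (T w) ≠ ⊤ := by
  obtain ⟨u0, hu0⟩ := hgproper
  intro htop
  have h := hT w u0
  rw [htop] at h
  have hlt : g u0 + ((c * ‖u0 - v' w‖ ^ 2 : ℝ) : EReal) < ⊤ :=
    EReal.add_lt_top hu0 (EReal.coe_ne_top _)
  have : (⊤ : EReal) + ((c * ‖T w - v' w‖ ^ 2 : ℝ) : EReal) = ⊤ := EReal.top_add_coe _
  rw [this] at h
  exact absurd h (not_le.2 hlt)

-- small real limit helper
lemma aux_limit {A B C : ℝ} (hC : 0 ≤ C) (h : ∀ t : ℝ, 0 < t → t ≤ 1 → A ≤ B + t * C) :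
    A ≤ B := by
  refine le_of_forall_pos_le_add fun ε hε => ?_
  have ht0 : 0 < min 1 (ε / (C + 1)) := lt_min one_pos (div_pos hε (by linarith))
  have := h _ ht0 (min_le_left _ _)
  have h2 : min 1 (ε / (C + 1)) * C ≤ ε := by
    have h3 : min 1 (ε / (C + 1)) ≤ ε / (C + 1) := min_le_right _ _
    have : min 1 (ε / (C + 1)) * C ≤ ε / (C + 1) * C :=
      mul_le_mul_of_nonneg_right h3 hC
    calc min 1 (ε / (C + 1)) * C ≤ ε / (C + 1) * C := this
      _ ≤ ε := by rw [div_mul_eq_mul_div, div_le_iff₀ (by linarith : (0:ℝ) < C + 1)]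
                  nlinarith
  linarith

lemma aux_prox (g : H → EReal) (γ : ℝ) (hγ : 0 < γ)
    (hgconv : ∀ x y : H, ∀ t : ℝ, 0 ≤ t → t ≤ 1 →
      g (t • x + (1 - t) • y) ≤ (t : EReal) * g x + ((1 - t : ℝ) : EReal) * g y)
    (hgproper : ∃ x, g x ≠ ⊤) (hgnebot : ∀ x, g x ≠ ⊥)
    (T : H → H) (v' : H → H)
    (hT : ∀ x u : H,
      g (T x) + (((2*γ)⁻¹ * ‖T x - v' x‖ ^ 2 : ℝ) : EReal) ≤
      g u + (((2*γ)⁻¹ * ‖u - v' x‖ ^ 2 : ℝ) : EReal)) (w u : H) :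
    g (T w) ≤ g u + ((γ⁻¹ * inner ℝ (T w - v' w) (u - T w) : ℝ) : EReal) := by
  rcases eq_or_ne (g u) ⊤ with hu | hu
  · rw [hu, EReal.top_add_coe]; exact le_top
  have hp : g (T w) ≠ ⊤ := aux_prox_ne_top g T v' hgproper hgnebot _ hT w
  set p := T w
  set v := v' w
  set gp : ℝ := (g p).toReal with hgp
  set gu : ℝ := (g u).toReal with hgu
  have hgpe : (gp : EReal) = g p := EReal.coe_toReal hp (hgnebot p)
  have hgue : (gu : EReal) = g u := EReal.coe_toReal hu (hgnebot u)
  -- real inequality for each t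
  have key : ∀ t : ℝ, 0 < t → t ≤ 1 →
      gp ≤ gu + γ⁻¹ * inner ℝ (p - v) (u - p) + t * ((2*γ)⁻¹ * ‖u - p‖ ^ 2) := by
    intro t ht0 ht1
    have hmid := hgconv u p t ht0.le ht1
    have hTt := hT w (t • u + (1 - t) • p)
    have hcomb : (gp : EReal) + (((2*γ)⁻¹ * ‖p - v‖ ^ 2 : ℝ) : EReal) ≤
        ((t * gu + (1 - t) * gp + (2*γ)⁻¹ * ‖t • u + (1 - t) • p - v‖ ^ 2 : ℝ) : EReal) := by
      have hmid' : g (t • u + (1 - t) • p) ≤ ((t * gu + (1 - t) * gp : ℝ) : EReal) := by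
        refine hmid.trans ?_
        rw [← hgpe, ← hgue, ← EReal.coe_mul, ← EReal.coe_mul, ← EReal.coe_add]
      rw [hgpe]
      calc g p + (((2*γ)⁻¹ * ‖p - v‖ ^ 2 : ℝ) : EReal)
          ≤ g (t • u + (1 - t) • p) + (((2*γ)⁻¹ * ‖t • u + (1 - t) • p - v‖ ^ 2 : ℝ) : EReal) := hTt
        _ ≤ ((t * gu + (1 - t) * gp : ℝ) : EReal) + (((2*γ)⁻¹ * ‖t • u + (1 - t) • p - v‖ ^ 2 : ℝ) : EReal) := add_le_add_left hmid' _
        _ = ((t * gu + (1 - t) * gp + (2*γ)⁻¹ * ‖t • u + (1 - t) • p - v‖ ^ 2 : ℝ) : EReal) := by norm_cast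
    rw [← EReal.coe_add, EReal.coe_le_coe_iff] at hcomb
    have hnorm : ‖t • u + (1 - t) • p - v‖ ^ 2 =
        ‖p - v‖ ^ 2 + 2 * t * inner ℝ (p - v) (u - p) + t ^ 2 * ‖u - p‖ ^ 2 := by
      have heq : t • u + (1 - t) • p - v = (p - v) + t • (u - p) := by
        rw [smul_sub, sub_smul, one_smul]; abel
      rw [heq, norm_add_sq_real, real_inner_smul_right, norm_smul, mul_pow]
      have : |t| = t := abs_of_pos ht0
      rw [Real.norm_eq_abs, this]
      ring
    rw [hnorm] at hcomb
    have hγ' : (0:ℝ) < 2 * γ := by linarith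
    have hinv : (2*γ)⁻¹ * (2 * t) = t * γ⁻¹ := by
      field_simp
    -- from hcomb: gp ≤ t*gu + (1-t)*gp + (2γ)⁻¹ (2t ⟪⟫ + t² ‖‖²)
    have h5 : t * gp ≤ t * gu + (2*γ)⁻¹ * (2 * t * inner ℝ (p - v) (u - p))
        + (2*γ)⁻¹ * (t ^ 2 * ‖u - p‖ ^ 2) := by nlinarith [hcomb]
    have h6 := mul_le_mul_of_nonneg_left h5 (le_of_lt (inv_pos.2 ht0))
    rw [mul_add, mul_add] at h6
    have e1 : t⁻¹ * (t * gp) = gp := by field_simp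
    have e2 : t⁻¹ * (t * gu) = gu := by field_simp
    have e3 : t⁻¹ * ((2*γ)⁻¹ * (2 * t * inner ℝ (p - v) (u - p)))
        = γ⁻¹ * inner ℝ (p - v) (u - p) := by field_simp
    have e4 : t⁻¹ * ((2*γ)⁻¹ * (t ^ 2 * ‖u - p‖ ^ 2))
        = t * ((2*γ)⁻¹ * ‖u - p‖ ^ 2) := by field_simp
    rw [e1, e2, e3, e4] at h6
    linarith
  have hfin : gp ≤ gu + γ⁻¹ * inner ℝ (p - v) (u - p) :=
    aux_limit (by positivity) key
  calc g p = (gp : EReal) := hgpe.symm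
    _ ≤ ((gu + γ⁻¹ * inner ℝ (p - v) (u - p) : ℝ) : EReal) := EReal.coe_le_coe_iff.2 hfin
    _ = g u + ((γ⁻¹ * inner ℝ (p - v) (u - p) : ℝ) : EReal) := by
        rw [EReal.coe_add, hgue]

lemma aux_key (f : H → ℝ) (f' : H → H) (g : H → EReal) (β γ : ℝ)
    (hβ : 0 < β) (hγ : 0 < γ) (hγβ : γ ≤ 1 / β)
    (hfconv : ConvexOn ℝ Set.univ f)
    (hf' : ∀ x, HasGradientAt f (f' x) x)
    (hlip : ∀ x y, ‖f' x - f' y‖ ≤ β * ‖x - y‖)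
    (hgconv : ∀ x y : H, ∀ t : ℝ, 0 ≤ t → t ≤ 1 →
      g (t • x + (1 - t) • y) ≤ (t : EReal) * g x + ((1 - t : ℝ) : EReal) * g y)
    (hgproper : ∃ x, g x ≠ ⊤) (hgnebot : ∀ x, g x ≠ ⊥)
    (T : H → H)
    (hT : ∀ x u : H,
      g (T x) + (((2 * γ)⁻¹ * ‖T x - (x - γ • f' x)‖ ^ 2 : ℝ) : EReal) ≤
      g u + (((2 * γ)⁻¹ * ‖u - (x - γ • f' x)‖ ^ 2 : ℝ) : EReal))
    (h : H → EReal) (hh : ∀ x, h x = (f x : EReal) + g x) (w u : H) :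
    h (T w) + ((γ⁻¹ * inner ℝ (w - T w) (u - w) + (2*γ)⁻¹ * ‖w - T w‖ ^ 2 : ℝ) : EReal)
      ≤ h u := by
  have hprox := aux_prox g γ hγ hgconv hgproper hgnebot T (fun x => x - γ • f' x) hT w u
  have hptop : g (T w) ≠ ⊤ :=
    aux_prox_ne_top g T (fun x => x - γ • f' x) hgproper hgnebot _ hT w
  rcases eq_or_ne (g u) ⊤ with hu | hu
  · have : h u = ⊤ := by rw [hh u, hu]; simp
    rw [this]; exact le_top
  set p := T w with hpdef
  set gq : ℝ := (g p).toReal with hgq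
  set gu : ℝ := (g u).toReal with hgu
  have hgqe : (gq : EReal) = g p := EReal.coe_toReal hptop (hgnebot p)
  have hgue : (gu : EReal) = g u := EReal.coe_toReal hu (hgnebot u)
  set D : ℝ := γ⁻¹ * inner ℝ (p - (w - γ • f' w)) (u - p) with hD
  have hgreal : gq ≤ gu + D := by
    rw [← EReal.coe_le_coe_iff (y := (gu + D : ℝ))]
    rw [hgqe, EReal.coe_add, hgue]
    exact hprox
  -- real side
  have hdesc := aux_descent f f' β hf' hlip w p
  have hconv := aux_grad_convex f f' hfconv hf' w u
  -- inner product identities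
  have eD : D = γ⁻¹ * inner ℝ (p - w) (u - p) + inner ℝ (f' w) (u - p) := by
    rw [hD, show p - (w - γ • f' w) = (p - w) + γ • f' w by abel, inner_add_left,
      real_inner_smul_left]
    field_simp
  have e1 : (inner ℝ (w - p) (u - w) : ℝ) = - inner ℝ (p - w) (u - w) := by
    rw [show w - p = -(p - w) by abel, inner_neg_left]
  have e2 : (inner ℝ (p - w) (u - p) : ℝ) = inner ℝ (p - w) (u - w) - ‖w - p‖ ^ 2 := by
    rw [show u - p = (u - w) + (w - p) by abel, inner_add_right,
      show w - p = -(p - w) by abel, inner_neg_right, real_inner_self_eq_norm_sq,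
      norm_neg]
    ring_nf
  have e3 : (inner ℝ (f' w) (p - w) : ℝ) = inner ℝ (f' w) (u - w) - inner ℝ (f' w) (u - p) := by
    rw [← inner_sub_right]; congr 1; abel
  rw [e3] at hdesc
  have e4 : ‖p - w‖ = ‖w - p‖ := norm_sub_rev _ _
  rw [e4] at hdesc
  have hβγ : β / 2 ≤ (2 * γ)⁻¹ := by
    have h1 : γ * β ≤ 1 := (le_div_iff₀ hβ).1 hγβ
    rw [inv_eq_one_div, div_le_div_iff₀ (by norm_num) (by linarith : (0:ℝ) < 2 * γ)]
    nlinarith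
  have hreal : f p + gq + (γ⁻¹ * inner ℝ (w - p) (u - w) + (2*γ)⁻¹ * ‖w - p‖ ^ 2)
      ≤ f u + gu := by
    have h5 : β / 2 * ‖w - p‖ ^ 2 ≤ (2*γ)⁻¹ * ‖w - p‖ ^ 2 :=
      mul_le_mul_of_nonneg_right hβγ (by positivity)
    have hγinv : γ⁻¹ * ‖w - p‖ ^ 2 = (2*γ)⁻¹ * ‖w - p‖ ^ 2 + (2*γ)⁻¹ * ‖w - p‖ ^ 2 := by
      field_simp; ring
    have e1' : γ⁻¹ * (inner ℝ (w - p) (u - w) : ℝ)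
        = -(γ⁻¹ * inner ℝ (p - w) (u - w)) := by rw [e1]; ring
    have e2' : γ⁻¹ * (inner ℝ (p - w) (u - p) : ℝ)
        = γ⁻¹ * inner ℝ (p - w) (u - w) - γ⁻¹ * ‖w - p‖ ^ 2 := by rw [e2]; ring
    linarith [hgreal, hdesc, hconv, eD, e1', e2', h5, hγinv]
  -- EReal side
  rw [hh p, hh u, ← hgqe, ← hgue, ← EReal.coe_add, ← EReal.coe_add, ← EReal.coe_add,
    EReal.coe_le_coe_iff]
  linarith [hreal]

end AuxFista

theorem stmt_16 {H : Type*} [NormedAddCommGroup H] [InnerProductSpace ℝ H]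
    [CompleteSpace H]
    (f : H → ℝ) (f' : H → H) (g : H → EReal) (β γ : ℝ)
    (hβ : 0 < β) (hγ : 0 < γ) (hγβ : γ ≤ 1 / β)
    (hfconv : ConvexOn ℝ Set.univ f)
    (hf' : ∀ x, HasGradientAt f (f' x) x)
    (hlip : ∀ x y, ‖f' x - f' y‖ ≤ β * ‖x - y‖)
    (hgconv : ∀ x y : H, ∀ t : ℝ, 0 ≤ t → t ≤ 1 →
      g (t • x + (1 - t) • y) ≤ (t : EReal) * g x + ((1 - t : ℝ) : EReal) * g y)
    (hglsc : LowerSemicontinuous g)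
    (hgproper : ∃ x, g x ≠ ⊤)
    (hgnebot : ∀ x, g x ≠ ⊥)
    (T : H → H)
    (hT : ∀ x u : H,
      g (T x) + (((2 * γ)⁻¹ * ‖T x - (x - γ • f' x)‖ ^ 2 : ℝ) : EReal) ≤
      g u + (((2 * γ)⁻¹ * ‖u - (x - γ • f' x)‖ ^ 2 : ℝ) : EReal))
    (h : H → EReal) (hh : ∀ x, h x = (f x : EReal) + g x)
    (y xm : H) (τ τp : ℝ) (hτ : 1 ≤ τ) (hτp : 1 ≤ τp)
    (x yp xp : H) (hx : x = T y)
    (hyp : yp = x + ((τ - 1) / τp) • (x - xm)) (hxp : xp = T yp) :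
    h xp + (((2 * γ)⁻¹ * ‖xp - x‖ ^ 2 : ℝ) : EReal) ≤
    h x + (((τ - 1) ^ 2 / τp ^ 2 * ((2 * γ)⁻¹ * ‖x - xm‖ ^ 2) : ℝ) : EReal) := by
  have key := aux_key f f' g β γ hβ hγ hγβ hfconv hf' hlip hgconv hgproper hgnebot
    T hT h hh yp x
  rw [← hxp] at key
  -- norms
  have hr0 : 0 ≤ (τ - 1) / τp := div_nonneg (by linarith) (by linarith)
  have hA : ‖yp - x‖ ^ 2 = (τ - 1) ^ 2 / τp ^ 2 * ‖x - xm‖ ^ 2 := by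
    have : yp - x = ((τ - 1) / τp) • (x - xm) := by rw [hyp]; abel
    rw [this, norm_smul, Real.norm_eq_abs, abs_of_nonneg hr0, mul_pow, div_pow]
  have hnormsq : ‖xp - x‖ ^ 2 =
      ‖xp - yp‖ ^ 2 + 2 * inner ℝ (xp - yp) (yp - x) + ‖yp - x‖ ^ 2 := by
    rw [show xp - x = (xp - yp) + (yp - x) by abel, norm_add_sq_real]
  have einner : (inner ℝ (yp - xp) (x - yp) : ℝ) = inner ℝ (xp - yp) (yp - x) := by
    rw [show yp - xp = -(xp - yp) by abel, show x - yp = -(yp - x) by abel,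
      inner_neg_neg]
  have enorm : ‖yp - xp‖ = ‖xp - yp‖ := norm_sub_rev _ _
  have hCd : (2 * γ)⁻¹ * ‖xp - x‖ ^ 2 =
      (γ⁻¹ * inner ℝ (yp - xp) (x - yp) + (2 * γ)⁻¹ * ‖yp - xp‖ ^ 2)
      + (τ - 1) ^ 2 / τp ^ 2 * ((2 * γ)⁻¹ * ‖x - xm‖ ^ 2) := by
    rw [einner, enorm, hnormsq]
    have hA' : (τ - 1) ^ 2 / τp ^ 2 * ((2 * γ)⁻¹ * ‖x - xm‖ ^ 2)
        = (2 * γ)⁻¹ * ‖yp - x‖ ^ 2 := by rw [hA]; ring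
    rw [hA']
    field_simp
    ring
  calc h xp + (((2 * γ)⁻¹ * ‖xp - x‖ ^ 2 : ℝ) : EReal)
      = h xp + ((γ⁻¹ * inner ℝ (yp - xp) (x - yp) + (2 * γ)⁻¹ * ‖yp - xp‖ ^ 2 : ℝ) : EReal)
        + (((τ - 1) ^ 2 / τp ^ 2 * ((2 * γ)⁻¹ * ‖x - xm‖ ^ 2) : ℝ) : EReal) := by
        rw [hCd, EReal.coe_add, ← add_assoc]
    _ ≤ h x + (((τ - 1) ^ 2 / τp ^ 2 * ((2 * γ)⁻¹ * ‖x - xm‖ ^ 2) : ℝ) : EReal) :=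
        add_le_add_left key _
end

section
/- Under the standing FISTA assumptions, suppose additionally τ ≤ τ_+, τ_+(τ_+ − 1) ≤ τ², and inf h > −∞. Then, with the one-step FISTA notation, τ_+² μ_+ + (2γ)⁻¹‖u_+‖² ≤ τ² μ + (2γ)⁻¹‖u‖² + τ_+ (h(z) − inf h). -/
open Filter intervalIntegral

lemma line_deriv {H : Type*} [NormedAddCommGroup H] [InnerProductSpace ℝ H] [CompleteSpace H]
    (f : H → ℝ) (f' : H → H) (hf' : ∀ x, HasGradientAt f (f' x) x)
    (a d : H) (t : ℝ) :
    HasDerivAt (fun s : ℝ => f (a + s • d)) (inner ℝ (f' (a + t • d)) d : ℝ) t := by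
  have hline : HasDerivAt (fun s : ℝ => a + s • d) d t := by
    simpa using ((hasDerivAt_id t).smul_const d).const_add a
  have hF := (hasGradientAt_iff_hasFDerivAt.mp (hf' (a + t • d)))
  have h2 := hF.comp_hasDerivAt t hline
  simp only [InnerProductSpace.toDual_apply_apply] at h2
  exact h2

lemma grad_convex {H : Type*} [NormedAddCommGroup H] [InnerProductSpace ℝ H] [CompleteSpace H]
    (f : H → ℝ) (f' : H → H) (hfconv : ConvexOn ℝ Set.univ f)
    (hf' : ∀ x, HasGradientAt f (f' x) x) (a b : H) :
    f a + inner ℝ (f' a) (b - a) ≤ f b := by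
  set d := b - a with hd
  have hder : HasDerivAt (fun s : ℝ => f (a + s • d)) (inner ℝ (f' a) d : ℝ) 0 := by
    simpa using line_deriv f f' hf' a d 0
  have hslope : Tendsto (slope (fun s : ℝ => f (a + s • d)) 0) (nhdsWithin 0 (Set.Ioi 0)) (nhds (inner ℝ (f' a) d : ℝ)) :=
    (hasDerivAt_iff_tendsto_slope.mp hder).mono_left
      (nhdsWithin_mono _ (fun t ht => ne_of_gt ht))
  have hbound : ∀ᶠ t in nhdsWithin (0:ℝ) (Set.Ioi 0),
      slope (fun s : ℝ => f (a + s • d)) 0 t ≤ f b - f a := by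
    filter_upwards [Ioc_mem_nhdsGT_of_mem (Set.left_mem_Ico.mpr one_pos)] with t ht
    have hcv := hfconv.2 (Set.mem_univ a) (Set.mem_univ b) (by linarith [ht.2] : (0:ℝ) ≤ 1 - t)
      (le_of_lt ht.1) (by ring)
    have hpt : (1 - t) • a + t • b = a + t • d := by
      rw [hd]; module
    rw [hpt, smul_eq_mul, smul_eq_mul] at hcv
    have h0 : a + (0:ℝ) • d = a := by simp
    rw [slope_def_field, h0, sub_zero, div_le_iff₀ ht.1]
    nlinarith [hcv]
  have := le_of_tendsto hslope hbound
  have h0 : a + (0:ℝ) • d = a := by simp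
  linarith [this]

lemma descent_lemma {H : Type*} [NormedAddCommGroup H] [InnerProductSpace ℝ H] [CompleteSpace H]
    (f : H → ℝ) (f' : H → H) (β : ℝ) (hβ : 0 < β)
    (hf' : ∀ x, HasGradientAt f (f' x) x)
    (hlip : ∀ x y, ‖f' x - f' y‖ ≤ β * ‖x - y‖) (a b : H) :
    f b ≤ f a + inner ℝ (f' a) (b - a) + β / 2 * ‖b - a‖ ^ 2 := by
  set d := b - a with hd
  have hf'cont : Continuous f' := by
    refine (LipschitzWith.of_dist_le_mul (K := β.toNNReal) (f := f') ?_).continuous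
    intro u v
    simpa [dist_eq_norm, Real.coe_toNNReal _ hβ.le] using hlip u v
  have hcont : Continuous (fun t : ℝ => (inner ℝ (f' (a + t • d)) d : ℝ)) := by
    exact (hf'cont.comp (by continuity)).inner continuous_const
  have hftc : ∫ t in (0:ℝ)..1, (inner ℝ (f' (a + t • d)) d : ℝ) =
      f (a + (1:ℝ) • d) - f (a + (0:ℝ) • d) := by
    exact integral_eq_sub_of_hasDerivAt (fun t _ => line_deriv f f' hf' a d t)
      (hcont.intervalIntegrable 0 1)
  have hab : a + (1:ℝ) • d = b := by rw [hd]; module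
  have ha0 : a + (0:ℝ) • d = a := by simp
  rw [hab, ha0] at hftc
  have hmono : ∫ t in (0:ℝ)..1, (inner ℝ (f' (a + t • d)) d : ℝ) ≤
      ∫ t in (0:ℝ)..1, ((inner ℝ (f' a) d : ℝ) + β * t * ‖d‖ ^ 2) := by
    apply integral_mono_on (by norm_num) (hcont.intervalIntegrable 0 1)
      ((by continuity : Continuous fun t : ℝ => (inner ℝ (f' a) d : ℝ) + β * t * ‖d‖ ^ 2).intervalIntegrable 0 1)
    intro t ht
    have h1 : (inner ℝ (f' (a + t • d)) d : ℝ) - (inner ℝ (f' a) d : ℝ) =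
        inner ℝ (f' (a + t • d) - f' a) d := by rw [inner_sub_left]
    have h2 : (inner ℝ (f' (a + t • d) - f' a) d : ℝ) ≤ ‖f' (a + t • d) - f' a‖ * ‖d‖ :=
      real_inner_le_norm _ _
    have h3 : ‖f' (a + t • d) - f' a‖ ≤ β * ‖t • d‖ := by
      simpa using hlip (a + t • d) a
    have h4 : ‖t • d‖ = t * ‖d‖ := by
      rw [norm_smul, Real.norm_eq_abs, abs_of_nonneg ht.1]
    rw [h4] at h3
    have h5 := mul_le_mul_of_nonneg_right h3 (norm_nonneg d)
    have h6 : β * (t * ‖d‖) * ‖d‖ = β * t * ‖d‖ ^ 2 := by ring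
    linarith [h1, h2, h5, h6.le, h6.ge]
  have hval : ∫ t in (0:ℝ)..1, ((inner ℝ (f' a) d : ℝ) + β * t * ‖d‖ ^ 2) =
      (inner ℝ (f' a) d : ℝ) + β / 2 * ‖d‖ ^ 2 := by
    have : ∀ t : ℝ, (inner ℝ (f' a) d : ℝ) + β * t * ‖d‖ ^ 2
        = (inner ℝ (f' a) d : ℝ) + (β * ‖d‖ ^ 2) * t := by intro t; ring
    simp only [this]
    rw [integral_add (intervalIntegrable_const) ((intervalIntegrable_id.const_mul _)),
      integral_const_mul]
    simp [integral_id]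
    ring
  linarith [hmono, hval.symm.le, hftc]

lemma gT_ne_top {H : Type*} [NormedAddCommGroup H] [InnerProductSpace ℝ H]
    (g : H → EReal) (γ : ℝ) (f' : H → H) (T : H → H)
    (hT : ∀ x u : H,
      g (T x) + (((2 * γ)⁻¹ * ‖T x - (x - γ • f' x)‖ ^ 2 : ℝ) : EReal) ≤
      g u + (((2 * γ)⁻¹ * ‖u - (x - γ • f' x)‖ ^ 2 : ℝ) : EReal))
    (hgproper : ∃ x, g x ≠ ⊤) (w : H) : g (T w) ≠ ⊤ := by
  obtain ⟨z₀, hz₀⟩ := hgproper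
  intro htop
  have h1 := hT w z₀
  rw [htop] at h1
  have h2 : (⊤ : EReal) + (((2 * γ)⁻¹ * ‖T w - (w - γ • f' w)‖ ^ 2 : ℝ) : EReal) = ⊤ :=
    EReal.top_add_coe _
  rw [h2, top_le_iff] at h1
  exact (EReal.add_lt_top hz₀ (EReal.coe_ne_top _)).ne h1

lemma prox_subgrad {H : Type*} [NormedAddCommGroup H] [InnerProductSpace ℝ H]
    (g : H → EReal) (γ : ℝ) (hγ : 0 < γ) (f' : H → H) (T : H → H)
    (hT : ∀ x u : H,
      g (T x) + (((2 * γ)⁻¹ * ‖T x - (x - γ • f' x)‖ ^ 2 : ℝ) : EReal) ≤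
      g u + (((2 * γ)⁻¹ * ‖u - (x - γ • f' x)‖ ^ 2 : ℝ) : EReal))
    (hgconv : ∀ x y : H, ∀ t : ℝ, 0 ≤ t → t ≤ 1 →
      g (t • x + (1 - t) • y) ≤ (t : EReal) * g x + ((1 - t : ℝ) : EReal) * g y)
    (hgnebot : ∀ x, g x ≠ ⊥) (hgproper : ∃ x, g x ≠ ⊤)
    (y w : H) (hw : g w ≠ ⊤) :
    (g (T y)).toReal + (1/γ) * inner ℝ (y - γ • f' y - T y) (w - T y) ≤ (g w).toReal := by
  set p := y - γ • f' y with hp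
  set v := T y with hv
  set c := (2*γ)⁻¹ with hc
  have hcpos : 0 < c := by positivity
  have hvt : g v ≠ ⊤ := gT_ne_top g γ f' T hT hgproper y
  set gy := (g v).toReal with hgy
  set gw := (g w).toReal with hgw
  have hgyc : g v = (gy : EReal) := (EReal.coe_toReal hvt (hgnebot v)).symm
  have hgwc : g w = (gw : EReal) := (EReal.coe_toReal hw (hgnebot w)).symm
  set A := gw - gy - (1/γ) * inner ℝ (p - v) (w - v) with hA
  set B := c * ‖w - v‖^2 with hB
  have hBnn : 0 ≤ B := by positivity
  have key : ∀ t : ℝ, 0 < t → t ≤ 1 → 0 ≤ A + t * B := by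
    intro t ht0 ht1
    set u := t • w + (1 - t) • v with hu
    have hconv := hgconv w v t ht0.le ht1
    rw [hgyc, hgwc] at hconv
    have hconv' : g u ≤ ((t * gw + (1-t) * gy : ℝ) : EReal) := by
      refine hconv.trans_eq ?_
      norm_cast
    have hut : g u ≠ ⊤ := (hconv'.trans_lt (EReal.coe_lt_top _)).ne
    set gu := (g u).toReal with hgu
    have hguc : g u = (gu : EReal) := (EReal.coe_toReal hut (hgnebot u)).symm
    rw [hguc] at hconv'
    have hgule : gu ≤ t * gw + (1-t) * gy := by exact_mod_cast hconv'
    have hTu := hT y u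
    rw [hgyc, hguc] at hTu
    have hTu' : gy + c * ‖v - p‖^2 ≤ gu + c * ‖u - p‖^2 := by exact_mod_cast hTu
    have hup : u - p = (v - p) + t • (w - v) := by rw [hu]; module
    have hexp : ‖u - p‖^2 = ‖v - p‖^2 + 2*(t*inner ℝ (v-p) (w-v)) + t^2*‖w-v‖^2 := by
      rw [hup, @norm_add_sq_real, inner_smul_right, norm_smul, Real.norm_eq_abs, mul_pow, sq_abs]
    have hsgn : (inner ℝ (v-p) (w-v) : ℝ) = -(inner ℝ (p-v) (w-v) : ℝ) := by
      rw [← inner_neg_left]; congr 1; abel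
    have h2c : 2 * c = 1/γ := by rw [hc]; field_simp
    have hstep : 0 ≤ t * (A + t * B) := by
      rw [hexp, hsgn] at hTu'
      rw [hA, hB, ← h2c]
      nlinarith [hTu', hgule]
    exact (mul_nonneg_iff_of_pos_left ht0).mp hstep
  have hAnn : 0 ≤ A := by
    by_contra hAneg
    push_neg at hAneg
    set t := min 1 ((-A)/(B+1)) with ht
    have ht0 : 0 < t := lt_min one_pos (div_pos (by linarith) (by linarith))
    have ht1 : t ≤ 1 := min_le_left _ _
    have hkey := key t ht0 ht1
    have htle : t ≤ (-A)/(B+1) := min_le_right _ _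
    have : t * (B+1) ≤ -A := (le_div_iff₀ (by linarith)).mp htle
    nlinarith
  rw [hA] at hAnn
  linarith

lemma onestep {H : Type*} [NormedAddCommGroup H] [InnerProductSpace ℝ H] [CompleteSpace H]
    (f : H → ℝ) (f' : H → H) (g : H → EReal) (β γ : ℝ)
    (hβ : 0 < β) (hγ : 0 < γ) (hγβ : γ ≤ 1 / β)
    (hfconv : ConvexOn ℝ Set.univ f)
    (hf' : ∀ x, HasGradientAt f (f' x) x)
    (hlip : ∀ x y, ‖f' x - f' y‖ ≤ β * ‖x - y‖)
    (hgconv : ∀ x y : H, ∀ t : ℝ, 0 ≤ t → t ≤ 1 →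
      g (t • x + (1 - t) • y) ≤ (t : EReal) * g x + ((1 - t : ℝ) : EReal) * g y)
    (hgproper : ∃ x, g x ≠ ⊤) (hgnebot : ∀ x, g x ≠ ⊥)
    (T : H → H)
    (hT : ∀ x u : H,
      g (T x) + (((2 * γ)⁻¹ * ‖T x - (x - γ • f' x)‖ ^ 2 : ℝ) : EReal) ≤
      g u + (((2 * γ)⁻¹ * ‖u - (x - γ • f' x)‖ ^ 2 : ℝ) : EReal))
    (y z : H) (hz : g z ≠ ⊤) :
    f (T y) + (g (T y)).toReal + (2*γ)⁻¹ * ‖T y - z‖^2 ≤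
    f z + (g z).toReal + (2*γ)⁻¹ * ‖y - z‖^2 := by
  set c := (2*γ)⁻¹ with hc
  have hcpos : 0 < c := by positivity
  have hi := descent_lemma f f' β hβ hf' hlip y (T y)
  have hii := grad_convex f f' hfconv hf' y z
  have hiii := prox_subgrad g γ hγ f' T hT hgconv hgnebot hgproper y z hz
  have hβγ : β * γ ≤ 1 := by
    rw [le_div_iff₀ hβ] at hγβ; linarith
  have hβc : β / 2 ≤ c := by
    rw [hc]
    have h2γ : (2*γ)⁻¹ * (2*γ) = 1 := inv_mul_cancel₀ (by positivity)
    nlinarith [h2γ]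
  have h1 : β / 2 * ‖T y - y‖^2 ≤ c * ‖T y - y‖^2 :=
    mul_le_mul_of_nonneg_right hβc (sq_nonneg _)
  have h2c : 1/γ = 2*c := by rw [hc]; field_simp
  have hcγ : 2*c*γ = 1 := by rw [hc]; field_simp
  have Ia : (inner ℝ (f' y) (T y - y) : ℝ) + inner ℝ (f' y) (z - T y) = inner ℝ (f' y) (z - y) := by
    rw [← inner_add_right]
    congr 1
    abel
  have Ib : (inner ℝ (y - γ • f' y - T y) (z - T y) : ℝ)
      = inner ℝ (y - T y) (z - T y) - γ * inner ℝ (f' y) (z - T y) := by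
    have he : y - γ • f' y - T y = (y - T y) - γ • f' y := by module
    rw [he, inner_sub_left, real_inner_smul_left]
  have Ic : ‖y - z‖^2 = ‖y - T y‖^2 + 2*inner ℝ (y - T y) (T y - z) + ‖T y - z‖^2 := by
    have he : y - z = (y - T y) + (T y - z) := by abel
    rw [he, @norm_add_sq_real]
  have Id : (inner ℝ (y - T y) (T y - z) : ℝ) = -inner ℝ (y - T y) (z - T y) := by
    rw [← inner_neg_right]
    congr 1
    abel
  have Icc : c * ‖y - z‖^2
      = c*‖y - T y‖^2 - 2*(c*inner ℝ (y - T y) (z - T y)) + c*‖T y - z‖^2 := by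
    rw [Ic, Id]; ring
  rw [Ib, h2c] at hiii
  have hiB : f (T y) ≤ f y + inner ℝ (f' y) (T y - y) + c * ‖T y - y‖^2 := by linarith
  have hsym : ‖T y - y‖^2 = ‖y - T y‖^2 := by rw [← norm_neg]; congr 1; abel
  rw [hsym] at hiB
  have hgam : 2*c*(γ * inner ℝ (f' y) (z - T y)) = inner ℝ (f' y) (z - T y) := by
    rw [← mul_assoc, hcγ, one_mul]
  nlinarith [hiB, hii, hiii, Icc, Ia, hgam]

set_option maxHeartbeats 1000000 in
theorem stmt_18 {H : Type*} [NormedAddCommGroup H] [InnerProductSpace ℝ H]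
    [CompleteSpace H]
    (f : H → ℝ) (f' : H → H) (g : H → EReal) (β γ : ℝ)
    (hβ : 0 < β) (hγ : 0 < γ) (hγβ : γ ≤ 1 / β)
    (hfconv : ConvexOn ℝ Set.univ f)
    (hf' : ∀ x, HasGradientAt f (f' x) x)
    (hlip : ∀ x y, ‖f' x - f' y‖ ≤ β * ‖x - y‖)
    (hgconv : ∀ x y : H, ∀ t : ℝ, 0 ≤ t → t ≤ 1 →
      g (t • x + (1 - t) • y) ≤ (t : EReal) * g x + ((1 - t : ℝ) : EReal) * g y)
    (hglsc : LowerSemicontinuous g)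
    (hgproper : ∃ x, g x ≠ ⊤)
    (hgnebot : ∀ x, g x ≠ ⊥)
    (T : H → H)
    (hT : ∀ x u : H,
      g (T x) + (((2 * γ)⁻¹ * ‖T x - (x - γ • f' x)‖ ^ 2 : ℝ) : EReal) ≤
      g u + (((2 * γ)⁻¹ * ‖u - (x - γ • f' x)‖ ^ 2 : ℝ) : EReal))
    (h : H → EReal) (hh : ∀ x, h x = (f x : EReal) + g x)
    (y xm : H) (τ τp : ℝ) (hτ : 1 ≤ τ) (hτp : 1 ≤ τp)
    (x yp xp : H) (hx : x = T y)
    (hyp : yp = x + ((τ - 1) / τp) • (x - xm)) (hxp : xp = T yp) :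
    τ ≤ τp → τp * (τp - 1) ≤ τ ^ 2 → (⊥ : EReal) < ⨅ w, h w →
    ∀ z : H, h z ≠ ⊤ →
      ((τp ^ 2 : ℝ) : EReal) * (h xp - h z) +
        (((2 * γ)⁻¹ * ‖τp • xp - (τp - 1) • x - z‖ ^ 2 : ℝ) : EReal) ≤
      ((τ ^ 2 : ℝ) : EReal) * (h x - h z) +
        (((2 * γ)⁻¹ * ‖τ • x - (τ - 1) • xm - z‖ ^ 2 : ℝ) : EReal) +
        ((τp : ℝ) : EReal) * (h z - ⨅ w, h w) := by
  intro hττp hτs hbot z hztop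
  have hτp0 : τp ≠ 0 := by positivity
  have hτppos : (0:ℝ) < τp := by linarith
  set c := (2*γ)⁻¹ with hc
  have hcpos : 0 < c := by positivity
  -- finiteness of g at relevant points
  have gzt : g z ≠ ⊤ := by
    intro hgz
    apply hztop
    rw [hh z, hgz]
    simp
  have gxt : g x ≠ ⊤ := by rw [hx]; exact gT_ne_top g γ f' T hT hgproper y
  have gxpt : g xp ≠ ⊤ := by rw [hxp]; exact gT_ne_top g γ f' T hT hgproper yp
  -- h values as reals
  have hval : ∀ w, g w ≠ ⊤ → h w = ((f w + (g w).toReal : ℝ) : EReal) := by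
    intro w hw
    rw [hh w, ← EReal.coe_toReal hw (hgnebot w)]
    norm_cast
  -- infimum
  set m := ⨅ w, h w with hm
  have hmle : ∀ w, m ≤ h w := fun w => iInf_le _ w
  have hmtop : m ≠ ⊤ := ((hmle z).trans_lt (lt_top_iff_ne_top.mpr hztop)).ne
  have hmbot : m ≠ ⊥ := hbot.ne'
  set mR := m.toReal with hmR
  have hmc : m = (mR : EReal) := (EReal.coe_toReal hmtop hmbot).symm
  have K3 : mR ≤ f x + (g x).toReal := by
    have h1 := hmle x
    rw [hmc, hval x gxt] at h1
    exact_mod_cast h1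
  have K4 : mR ≤ f z + (g z).toReal := by
    have h1 := hmle z
    rw [hmc, hval z gzt] at h1
    exact_mod_cast h1
  -- the auxiliary point z'
  set t := τp⁻¹ with htdef
  have ht0 : 0 < t := by positivity
  have ht1 : t ≤ 1 := by
    rw [htdef]
    rw [inv_le_one_iff₀]
    right; linarith
  set z' := t • z + (1 - t) • x with hz'
  have hfz' : f z' ≤ t * f z + (1 - t) * f x := by
    have := hfconv.2 (Set.mem_univ z) (Set.mem_univ x) ht0.le (by linarith : (0:ℝ) ≤ 1 - t) (by ring)
    simpa [hz', smul_eq_mul] using this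
  have hgz'le : g z' ≤ ((t * (g z).toReal + (1 - t) * (g x).toReal : ℝ) : EReal) := by
    have h1 := hgconv z x t ht0.le ht1
    rw [← EReal.coe_toReal gzt (hgnebot z), ← EReal.coe_toReal gxt (hgnebot x)] at h1
    rw [← hz'] at h1
    refine h1.trans_eq ?_
    norm_cast
  have gz't : g z' ≠ ⊤ := (hgz'le.trans_lt (EReal.coe_lt_top _)).ne
  have hgz'R : (g z').toReal ≤ t * (g z).toReal + (1 - t) * (g x).toReal := by
    rw [← EReal.coe_toReal gz't (hgnebot z')] at hgz'le
    exact_mod_cast hgz'le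
  -- one-step inequality at yp, z'
  have key := onestep f f' g β γ hβ hγ hγβ hfconv hf' hlip hgconv hgproper hgnebot T hT yp z' gz't
  rw [← hxp, ← hc] at key
  -- vector identities
  set u := τ • x - (τ - 1) • xm - z with hu
  set up := τp • xp - (τp - 1) • x - z with hup
  have hv1 : xp - z' = t • up := by
    rw [hz', hup, htdef]
    match_scalars <;> field_simp
  have hv2 : yp - z' = t • u := by
    rw [hz', hu, htdef, hyp]
    match_scalars <;> field_simp <;> ring
  have hn1 : ‖xp - z'‖^2 = t^2 * ‖up‖^2 := by
    rw [hv1, norm_smul, mul_pow, Real.norm_eq_abs, sq_abs]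
  have hn2 : ‖yp - z'‖^2 = t^2 * ‖u‖^2 := by
    rw [hv2, norm_smul, mul_pow, Real.norm_eq_abs, sq_abs]
  rw [hn1, hn2] at key
  have htτ : τp * t = 1 := mul_inv_cancel₀ hτp0
  -- multiply key by τp^2
  have K1 : τp^2 * (f xp + (g xp).toReal) + c * ‖up‖^2 ≤
      τp^2 * (f z' + (g z').toReal) + c * ‖u‖^2 := by
    have hmul := mul_le_mul_of_nonneg_left key (sq_nonneg τp)
    have e1 : τp^2 * (c * (t^2 * ‖up‖^2)) = c * ‖up‖^2 := by
      rw [htdef]; field_simp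
    have e2 : τp^2 * (c * (t^2 * ‖u‖^2)) = c * ‖u‖^2 := by
      rw [htdef]; field_simp
    linarith [hmul, e1, e2]
  -- convexity bound multiplied by τp^2
  have K2 : τp^2 * (f z' + (g z').toReal) ≤
      τp * (τp - 1) * (f x + (g x).toReal) + τp * (f z + (g z).toReal) := by
    have hsum : f z' + (g z').toReal ≤
        t * (f z + (g z).toReal) + (1 - t) * (f x + (g x).toReal) := by
      linarith [hfz', hgz'R]
    have hmul := mul_le_mul_of_nonneg_left hsum (sq_nonneg τp)
    have e3 : τp^2 * (t * (f z + (g z).toReal)) = τp * (f z + (g z).toReal) := by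
      rw [htdef]; field_simp
    have e4 : τp^2 * ((1 - t) * (f x + (g x).toReal)) = τp * (τp - 1) * (f x + (g x).toReal) := by
      rw [htdef]; field_simp
    linarith [hmul, e3, e4]
  -- final real inequality
  have ha : (0:ℝ) ≤ τ^2 - τp * (τp - 1) := by linarith
  have hτ2 : τ^2 ≤ τp^2 := by nlinarith
  have hb : (0:ℝ) ≤ τp - (τ^2 - τp * (τp - 1)) := by nlinarith
  have p1 : 0 ≤ (τ^2 - τp * (τp - 1)) * ((f x + (g x).toReal) - mR) :=
    mul_nonneg ha (by linarith)
  have p2 : 0 ≤ (τp - (τ^2 - τp * (τp - 1))) * ((f z + (g z).toReal) - mR) :=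
    mul_nonneg hb (by linarith)
  have final : τp^2 * ((f xp + (g xp).toReal) - (f z + (g z).toReal)) + c * ‖up‖^2 ≤
      τ^2 * ((f x + (g x).toReal) - (f z + (g z).toReal)) + c * ‖u‖^2 +
      τp * ((f z + (g z).toReal) - mR) := by
    nlinarith [K1, K2, p1, p2]
  -- convert to EReal
  rw [hval xp gxpt, hval x gxt, hval z gzt, hmc]
  exact_mod_cast final
end
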